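/- arXiv:2204.05497 — 9 statements merged into one kernel-verified Lean document; each statement's English description precedes it below -/
import Mathlib

section
/- Let G be a finite p-group acted on by a group A such that every proper A-invariant subgroup H of G satisfies d(H) < d(G). If G is abelian, then G is elementary abelian. -/
def AInv (A : Type*) {G : Type*} [Group A] [Group G] [MulDistribMulAction A G]
    (H : Subgroup G) : Prop :=
  ∀ (a : A) (g : G), g ∈ H → a • g ∈ H

/-- `G` is `d`-maximal for `A`-subgroups: every proper `A`-invariant subgroup
has strictly smaller minimal number of generators. -/
def DMax (A G : Type*) [Group A] [Group G] [Finite G] [MulDistribMulAction A G] : Prop :=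
  ∀ H : Subgroup G, AInv A H → H ≠ ⊤ → Group.rank H < Group.rank G

/-- In a nontrivial `p`-group there is a nontrivial element killed by `p`. -/
private lemma exists_pow_p_eq_one {p : ℕ} {Q : Type*} [Group Q] [Nontrivial Q]
    (hQ : IsPGroup p Q) : ∃ y : Q, y ≠ 1 ∧ y ^ p = 1 := by
  classical
  obtain ⟨g, hg⟩ := exists_ne (1 : Q)
  have hex : ∃ m, g ^ p ^ m = 1 := hQ g
  have hk : g ^ p ^ Nat.find hex = 1 := Nat.find_spec hex
  have hkpos : Nat.find hex ≠ 0 := by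
    intro h0
    rw [h0, pow_zero, pow_one] at hk
    exact hg hk
  refine ⟨g ^ p ^ (Nat.find hex - 1), ?_, ?_⟩
  · intro h
    exact Nat.find_min hex (Nat.sub_lt (Nat.pos_of_ne_zero hkpos) one_pos) h
  · rw [← pow_mul, ← pow_succ, Nat.sub_add_cancel (Nat.one_le_iff_ne_zero.mpr hkpos)]
    exact hk

/-- The `p`-th power map on the quotient `G ⧸ K` is surjective when `K ⊔ Gᵖ = ⊤`. -/
private lemma pow_surj_of_sup {p : ℕ} {G : Type*} [CommGroup G]
    (K : Subgroup G) (hsup : K ⊔ (powMonoidHom p : G →* G).range = ⊤) :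
    Function.Surjective (fun y : G ⧸ K => y ^ p) := by
  intro y
  obtain ⟨x, rfl⟩ := QuotientGroup.mk_surjective y
  have hx : x ∈ K ⊔ (powMonoidHom p : G →* G).range := hsup ▸ Subgroup.mem_top x
  obtain ⟨k, hk, z, hz, rfl⟩ := Subgroup.mem_sup.mp hx
  obtain ⟨w, rfl⟩ := hz
  refine ⟨QuotientGroup.mk w, ?_⟩
  show ((QuotientGroup.mk' K) w) ^ p = (QuotientGroup.mk' K) (k * powMonoidHom p w)
  rw [map_mul, ← map_pow]
  have hk1 : (QuotientGroup.mk' K) k = 1 := (QuotientGroup.eq_one_iff k).mpr hk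
  rw [hk1, one_mul]
  rfl

/-- Nakayama-type lemma: if `K ⊔ Gᵖ = ⊤` in a finite abelian `p`-group, then `K = ⊤`. -/
private lemma eq_top_of_sup_pow {p : ℕ} {G : Type*} [CommGroup G] [Finite G]
    (hG : IsPGroup p G) (K : Subgroup G)
    (hsup : K ⊔ (powMonoidHom p : G →* G).range = ⊤) : K = ⊤ := by
  by_contra hne
  have hnt : Nontrivial (G ⧸ K) := by
    obtain ⟨x, hx⟩ : ∃ x : G, x ∉ K := by
      by_contra h
      push_neg at h
      exact hne ((Subgroup.eq_top_iff' K).mpr h)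
    exact ⟨⟨QuotientGroup.mk x, 1, by simpa [QuotientGroup.eq_one_iff] using hx⟩⟩
  obtain ⟨y, hy1, hyp⟩ := exists_pow_p_eq_one (hG.to_quotient K)
  have hinj : Function.Injective (fun y : G ⧸ K => y ^ p) :=
    Finite.injective_iff_surjective.mpr (pow_surj_of_sup K hsup)
  refine hy1 (hinj ?_)
  show y ^ p = (1 : G ⧸ K) ^ p
  rw [hyp, one_pow]

/-- For a finite abelian group of exponent dividing `p`, `p ^ rank` divides the order. -/
private lemma pow_rank_dvd_card {p : ℕ} (hp : p.Prime) (n : ℕ) :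
    ∀ (Q : Type u) (_ : CommGroup Q) (_ : Finite Q), Nat.card Q = n → (∀ y : Q, y ^ p = 1) →
      p ^ Group.rank Q ∣ Nat.card Q := by
  induction n using Nat.strong_induction_on with
  | _ n ih =>
    intro Q _ _ hn hexp
    classical
    rcases subsingleton_or_nontrivial Q with hs | hnt
    · -- trivial group: rank is 0
      have hrank : Group.rank Q ≤ (∅ : Finset Q).card := by
        apply Group.rank_le
        rw [Subgroup.eq_top_iff']
        intro x
        rw [Subsingleton.elim x 1]
        exact Subgroup.one_mem _
      simp only [Finset.card_empty, Nat.le_zero] at hrank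
      rw [hrank, pow_zero]
      exact one_dvd _
    · obtain ⟨g, hg⟩ := exists_ne (1 : Q)
      have hord : orderOf g = p := by
        have h1 : orderOf g ∣ p := orderOf_dvd_of_pow_eq_one (hexp g)
        rcases (Nat.dvd_prime hp).mp h1 with h | h
        · exact absurd (orderOf_eq_one_iff.mp h) hg
        · exact h
      set Z := Subgroup.zpowers g with hZ
      have hcardZ : Nat.card Z = p := by rw [Nat.card_zpowers, hord]
      have hcardsplit : Nat.card Q = Nat.card (Q ⧸ Z) * p := by
        rw [Subgroup.card_eq_card_quotient_mul_card_subgroup Z, hcardZ]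
      have hQpos : 0 < Nat.card Q := Nat.card_pos
      have hcardlt : Nat.card (Q ⧸ Z) < n := by
        rw [← hn]
        calc Nat.card (Q ⧸ Z) < Nat.card (Q ⧸ Z) * p := by
              have hqpos : 0 < Nat.card (Q ⧸ Z) := Nat.card_pos
              exact lt_mul_of_one_lt_right hqpos hp.one_lt
          _ = Nat.card Q := hcardsplit.symm
      have hexp' : ∀ y : Q ⧸ Z, y ^ p = 1 := by
        intro y
        obtain ⟨x, rfl⟩ := QuotientGroup.mk_surjective y
        show ((QuotientGroup.mk' Z) x) ^ p = 1
        rw [← map_pow, hexp x, map_one]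
      have hdvd' := ih (Nat.card (Q ⧸ Z)) hcardlt (Q ⧸ Z) inferInstance inferInstance rfl hexp'
      -- rank Q ≤ rank (Q ⧸ Z) + 1
      obtain ⟨S, hScard, hSgen⟩ := Group.rank_spec (Q ⧸ Z)
      set T : Finset Q := insert g (S.image Quotient.out) with hT
      have hgT : g ∈ Subgroup.closure (T : Set Q) :=
        Subgroup.subset_closure (by simp [hT])
      have hZle : Z ≤ Subgroup.closure (T : Set Q) := by
        rw [hZ, Subgroup.zpowers_le]
        exact hgT
      have htop : Subgroup.closure (T : Set Q) = ⊤ := by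
        have himg : (S : Set (Q ⧸ Z)) ⊆ (QuotientGroup.mk' Z) '' (T : Set Q) := by
          intro y hy
          refine ⟨y.out, Finset.mem_coe.mpr ?_, QuotientGroup.out_eq' y⟩
          rw [hT]
          exact Finset.mem_insert_of_mem (Finset.mem_image_of_mem _ (Finset.mem_coe.mp hy))
        have hmap : Subgroup.map (QuotientGroup.mk' Z) (Subgroup.closure (T : Set Q)) = ⊤ := by
          rw [MonoidHom.map_closure]
          rw [eq_top_iff, ← hSgen]
          exact Subgroup.closure_mono himg
        have h2 := Subgroup.comap_map_eq (QuotientGroup.mk' Z) (Subgroup.closure (T : Set Q))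
        rw [hmap, Subgroup.comap_top, QuotientGroup.ker_mk'] at h2
        rw [eq_top_iff, h2, sup_le_iff]
        exact ⟨le_refl _, hZle⟩
      have hrankQ : Group.rank Q ≤ Group.rank (Q ⧸ Z) + 1 := by
        calc Group.rank Q ≤ T.card := Group.rank_le htop
          _ ≤ (S.image Quotient.out).card + 1 := Finset.card_insert_le _ _
          _ ≤ S.card + 1 := by
              exact Nat.add_le_add_right Finset.card_image_le 1
          _ = Group.rank (Q ⧸ Z) + 1 := by rw [hScard]
      calc p ^ Group.rank Q ∣ p ^ (Group.rank (Q ⧸ Z) + 1) := pow_dvd_pow p hrankQ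
        _ = p ^ Group.rank (Q ⧸ Z) * p := by rw [pow_succ]
        _ ∣ Nat.card (Q ⧸ Z) * p := mul_dvd_mul_right hdvd' p
        _ = Nat.card Q := hcardsplit.symm

/-- The key inequality: in a finite abelian `p`-group, the rank of the kernel of the
`p`-th power map is at least the rank of `G`. -/
private lemma rank_le_rank_ker {p : ℕ} (hp : p.Prime) {G : Type*} [CommGroup G] [Finite G]
    (hG : IsPGroup p G) :
    Group.rank G ≤ Group.rank (powMonoidHom p : G →* G).ker := by
  classical
  set φ : G →* G := powMonoidHom p with hφ
  set N := φ.range with hN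
  -- every element of the quotient `G ⧸ N` has order dividing `p`
  have hQp : ∀ y : G ⧸ N, y ^ p = 1 := by
    intro y
    obtain ⟨x, rfl⟩ := QuotientGroup.mk_surjective y
    show ((QuotientGroup.mk' N) x) ^ p = 1
    rw [← map_pow]
    exact (QuotientGroup.eq_one_iff _).mpr ⟨x, rfl⟩
  -- Nakayama: `rank G ≤ rank (G ⧸ N)`
  have hrkG : Group.rank G ≤ Group.rank (G ⧸ N) := by
    obtain ⟨S, hScard, hSgen⟩ := Group.rank_spec (G ⧸ N)
    set T : Finset G := S.image Quotient.out with hT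
    have himg : (QuotientGroup.mk' N) '' (T : Set G) = (S : Set (G ⧸ N)) := by
      rw [hT, Finset.coe_image, Set.image_image]
      have h : ∀ y : G ⧸ N, (QuotientGroup.mk' N) y.out = y := fun y =>
        QuotientGroup.out_eq' y
      simp [h]
    have hmap : Subgroup.map (QuotientGroup.mk' N) (Subgroup.closure (T : Set G)) = ⊤ := by
      rw [MonoidHom.map_closure, himg, hSgen]
    have hsup : Subgroup.closure (T : Set G) ⊔ N = ⊤ := by
      have h2 := Subgroup.comap_map_eq (QuotientGroup.mk' N) (Subgroup.closure (T : Set G))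
      rw [hmap, Subgroup.comap_top, QuotientGroup.ker_mk'] at h2
      exact h2.symm
    have htop : Subgroup.closure (T : Set G) = ⊤ := eq_top_of_sup_pow hG _ hsup
    calc Group.rank G ≤ T.card := Group.rank_le htop
      _ ≤ S.card := Finset.card_image_le
      _ = Group.rank (G ⧸ N) := hScard
  -- `card φ.ker = card (G ⧸ N)`
  have hcard : Nat.card φ.ker = Nat.card (G ⧸ N) := by
    have h1 := Subgroup.card_eq_card_quotient_mul_card_subgroup N
    have h2 := Subgroup.card_eq_card_quotient_mul_card_subgroup φ.ker
    have h3 : Nat.card (G ⧸ φ.ker) = Nat.card N :=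
      Nat.card_congr (QuotientGroup.quotientKerEquivRange φ).toEquiv
    have hNpos : 0 < Nat.card N := Nat.card_pos
    have key : Nat.card N * Nat.card φ.ker = Nat.card N * Nat.card (G ⧸ N) := by
      calc Nat.card N * Nat.card φ.ker = Nat.card (G ⧸ φ.ker) * Nat.card φ.ker := by rw [h3]
        _ = Nat.card G := h2.symm
        _ = Nat.card (G ⧸ N) * Nat.card N := h1
        _ = Nat.card N * Nat.card (G ⧸ N) := Nat.mul_comm _ _
    exact Nat.eq_of_mul_eq_mul_left hNpos key
  -- `p ^ rank (G ⧸ N) ∣ card (G ⧸ N)`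
  have hdvdQ : p ^ Group.rank (G ⧸ N) ∣ Nat.card (G ⧸ N) :=
    pow_rank_dvd_card hp (Nat.card (G ⧸ N)) (G ⧸ N) inferInstance inferInstance rfl hQp
  -- `card φ.ker ∣ p ^ rank φ.ker`
  have hdvd : Nat.card φ.ker ∣ p ^ Group.rank φ.ker := by
    refine card_dvd_exponent_pow_rank' φ.ker (fun g => ?_)
    have hg : (g : G) ^ p = 1 := g.2
    ext
    push_cast
    exact hg
  have hfinal : p ^ Group.rank (G ⧸ N) ∣ p ^ Group.rank φ.ker := by
    refine hdvdQ.trans ?_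
    rw [← hcard]
    exact hdvd
  have hle : Group.rank (G ⧸ N) ≤ Group.rank φ.ker :=
    (Nat.pow_dvd_pow_iff_le_right hp.one_lt).mp hfinal
  exact hrkG.trans hle

/-- If a finite `p`-group `G` is `d`-maximal for `A`-subgroups and `G` is abelian,
then `G` is elementary abelian. -/
theorem stmt0 {p : ℕ} (hp : p.Prime) {A G : Type*} [Group A] [Group G] [Finite G]
    [MulDistribMulAction A G] (hG : IsPGroup p G) (hmax : DMax A G)
    (hab : ∀ x y : G, Commute x y) :
    ∀ x : G, x ^ p = 1 := by
  letI cg : CommGroup G := { ‹Group G› with mul_comm := fun a b => (hab a b).eq }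
  have hker : (powMonoidHom p : G →* G).ker = ⊤ := by
    by_contra hne
    have hAinv : AInv A (powMonoidHom p : G →* G).ker := by
      intro a g hg
      have hg1 : g ^ p = 1 := hg
      show (a • g) ^ p = 1
      rw [← smul_pow', hg1, smul_one]
    exact absurd (hmax _ hAinv hne) (not_lt.mpr (rank_le_rank_ker hp hG))
  intro x
  have hx : x ∈ (powMonoidHom p : G →* G).ker := hker ▸ Subgroup.mem_top x
  exact hx
end

section
/- Let G be a finite p-group acted on by a group A, and suppose G is d-maximal for A-subgroups. If N is a normal A-invariant subgroup of G with N ≤ Φ(G), then G/N is d-maximal for the induced A-action. -/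
/-- Lifting generators modulo a subgroup of the Frattini subgroup. -/
lemma rank_le_rank_quotient {G : Type*} [Group G] [Finite G] (N : Subgroup G) [N.Normal]
    (hNF : N ≤ frattini G) : Group.rank G ≤ Group.rank (G ⧸ N) := by
  classical
  obtain ⟨S, hScard, hSgen⟩ := Group.rank_spec (G ⧸ N)
  have hsurj : Function.Surjective (QuotientGroup.mk' N) := QuotientGroup.mk'_surjective N
  choose f hf using hsurj
  set T : Finset G := S.image f with hT
  have hmap : (Subgroup.closure (T : Set G)).map (QuotientGroup.mk' N) = ⊤ := by
    rw [MonoidHom.map_closure]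
    rw [eq_top_iff, ← hSgen]
    apply Subgroup.closure_mono
    intro x hx
    refine ⟨f x, ?_, hf x⟩
    simp only [hT, Finset.coe_image, Set.mem_image, Finset.mem_coe]
    exact ⟨x, hx, rfl⟩
  have hsup : Subgroup.closure (T : Set G) ⊔ N = ⊤ := by
    have := congrArg (Subgroup.comap (QuotientGroup.mk' N)) hmap
    rwa [Subgroup.comap_map_eq, QuotientGroup.ker_mk',
      Subgroup.comap_top] at this
  have hsupF : Subgroup.closure (T : Set G) ⊔ frattini G = ⊤ := by
    rw [eq_top_iff, ← hsup]
    exact sup_le_sup_left hNF _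
  have htop : Subgroup.closure (T : Set G) = ⊤ := frattini_nongenerating hsupF
  calc Group.rank G ≤ T.card := Group.rank_le htop
    _ ≤ S.card := Finset.card_image_le
    _ = Group.rank (G ⧸ N) := hScard

/-- If `G` is `d`-maximal for `A`-subgroups and `N ≤ Φ(G)` is a normal `A`-invariant
subgroup, then `G/N` is `d`-maximal for the induced `A`-action (invariance of a subgroup
of `G/N` being expressed via its preimage in `G`). -/
theorem stmt1 {p : ℕ} (hp : p.Prime) {A G : Type*} [Group A] [Group G] [Finite G]
    [MulDistribMulAction A G] (hG : IsPGroup p G) (hmax : DMax A G)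
    (N : Subgroup G) [N.Normal] (hNinv : AInv A N) (hNF : N ≤ frattini G) :
    ∀ K : Subgroup (G ⧸ N), AInv A (K.comap (QuotientGroup.mk' N)) → K ≠ ⊤ →
      Group.rank K < Group.rank (G ⧸ N) := by
  intro K hKinv hKne
  set H : Subgroup G := K.comap (QuotientGroup.mk' N) with hH
  have hsurj : Function.Surjective (QuotientGroup.mk' N) := QuotientGroup.mk'_surjective N
  have hmapH : H.map (QuotientGroup.mk' N) = K :=
    Subgroup.map_comap_eq_self_of_surjective hsurj K
  have hHne : H ≠ ⊤ := by
    intro h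
    apply hKne
    rw [← hmapH, h, Subgroup.map_top_of_surjective _ hsurj]
  have h1 : Group.rank H < Group.rank G := hmax H hKinv hHne
  have h2 : Group.rank K ≤ Group.rank H := by
    rw [← Subgroup.rank_congr hmapH]
    exact Group.rank_le_of_surjective ((QuotientGroup.mk' N).subgroupMap H)
      ((QuotientGroup.mk' N).subgroupMap_surjective H)
  have h3 : Group.rank G ≤ Group.rank (G ⧸ N) := rank_le_rank_quotient N hNF
  omega
end

section
/- Let G be a finite p-group acted on by a group A. If G is d-maximal for A-subgroups, then Φ(G) = [G,G], i.e., the Frattini subgroup coincides with the commutator subgroup. -/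
open Subgroup

section Aux

variable {p : ℕ}

lemma aux_le_frattini {G : Type*} [Group G] {N : Subgroup G}
    (h : ∀ M : Subgroup G, IsCoatom M → N ≤ M) : N ≤ frattini G :=
  le_iInf₂ h

lemma aux_isCoatom_of_index_prime {G : Type*} [Group G] {M : Subgroup G}
    (hp : p.Prime) (hM : M.index = p) : IsCoatom M := by
  constructor
  · intro h
    rw [h, Subgroup.index_top] at hM
    exact hp.one_lt.ne' hM.symm
  · intro K hK
    have hle : M ≤ K := hK.le
    have hmul := Subgroup.relIndex_mul_index hle
    rw [hM] at hmul
    rcases (Nat.Prime.eq_one_or_self_of_dvd hp _ ⟨K.index, hmul.symm⟩ :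
        M.relIndex K = 1 ∨ M.relIndex K = p) with h1 | h1
    · exact absurd (Subgroup.relIndex_eq_one.mp h1) (not_le_of_gt hK)
    · rw [h1] at hmul
      have hKi : K.index = 1 := by
        have hp0 : p ≠ 0 := hp.pos.ne'
        have : p * K.index = p * 1 := by rw [hmul, mul_one]
        exact Nat.eq_of_mul_eq_mul_left hp.pos this
      exact Subgroup.index_eq_one.mp hKi

open scoped commutatorElement in
/-- In a finite `p`-group, every maximal subgroup contains all `p`-th powers and the
commutator subgroup. -/
lemma aux_coatom {G : Type*} [Group G] [Finite G] (hp : p.Prime) (hG : IsPGroup p G)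
    {M : Subgroup G} (hM : IsCoatom M) :
    (∀ g : G, g ^ p ∈ M) ∧ _root_.commutator G ≤ M := by
  haveI : Fact p.Prime := ⟨hp⟩
  haveI : Group.IsNilpotent G := hG.isNilpotent
  haveI hnorm : M.Normal :=
    Subgroup.NormalizerCondition.normal_of_coatom M (normalizerCondition_of_isNilpotent (G := G)) hM
  have hQ : IsPGroup p (G ⧸ M) := hG.to_quotient M
  -- every subgroup of the quotient is trivial
  have hdich : ∀ K : Subgroup (G ⧸ M), K = ⊥ ∨ K = ⊤ := by
    intro K
    have h1 : M ≤ K.comap (QuotientGroup.mk' M) := by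
      intro m hm
      have h1 : QuotientGroup.mk' M m = 1 := (QuotientGroup.eq_one_iff m).mpr hm
      rw [Subgroup.mem_comap, h1]
      exact K.one_mem
    have hKmap : (K.comap (QuotientGroup.mk' M)).map (QuotientGroup.mk' M) = K :=
      Subgroup.map_comap_eq_self_of_surjective (QuotientGroup.mk'_surjective M) K
    by_cases hKM : K.comap (QuotientGroup.mk' M) = M
    · left
      rw [← hKmap, hKM]
      rw [eq_bot_iff]
      rintro x ⟨m, hm, rfl⟩
      simp [(QuotientGroup.eq_one_iff m).mpr hm]
    · right
      have hlt : M < K.comap (QuotientGroup.mk' M) := lt_of_le_of_ne h1 (Ne.symm hKM)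
      have := hM.2 _ hlt
      rw [← hKmap, this]
      rw [eq_top_iff]
      intro x _
      obtain ⟨g, rfl⟩ := QuotientGroup.mk'_surjective M x
      exact ⟨g, trivial, rfl⟩
  -- the quotient has exponent p
  have hexp : ∀ y : G ⧸ M, y ^ p = 1 := by
    intro y
    by_cases hy1 : y ^ p = 1
    · exact hy1
    exfalso
    have hz : Subgroup.zpowers (y ^ p) = ⊤ :=
      (hdich _).resolve_left (by simpa [Subgroup.zpowers_eq_bot] using hy1)
    have hy : y ∈ Subgroup.zpowers (y ^ p) := hz ▸ Subgroup.mem_top y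
    obtain ⟨m, hm⟩ := hy
    have h1 : y ^ ((p : ℤ) * m - 1) = 1 := by
      have hpm : y ^ ((p : ℤ) * m) = y := by
        rw [zpow_mul, zpow_natCast]
        exact hm
      rw [zpow_sub, hpm, zpow_one]
      simp
    have hdvd : ((orderOf y : ℤ)) ∣ ((p : ℤ) * m - 1) := orderOf_dvd_iff_zpow_eq_one.mpr h1
    obtain ⟨k, hk⟩ := hQ y
    have hordy : orderOf y ∣ p ^ k := orderOf_dvd_of_pow_eq_one hk
    have hpord : p ∣ orderOf y := by
      rcases (Nat.dvd_prime_pow hp).mp hordy with ⟨j, hj, hjy⟩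
      cases j with
      | zero =>
        rw [pow_zero] at hjy
        rw [orderOf_eq_one_iff.mp hjy] at hy1
        simp at hy1
      | succ j =>
        rw [hjy]
        exact dvd_pow_self p (Nat.succ_ne_zero j)
    have h2 : (p : ℤ) ∣ (p : ℤ) * m - 1 := dvd_trans (Int.natCast_dvd_natCast.mpr hpord) hdvd
    have h3 : (p : ℤ) ∣ 1 := (dvd_sub_right ⟨m, rfl⟩).mp h2
    have h4 := Int.le_of_dvd one_pos h3
    have h5 := hp.two_le
    omega
  -- the quotient is commutative
  have hcomm : ∀ a b : G ⧸ M, a * b = b * a := by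
    intro a b
    by_cases ha : a = 1
    · simp [ha]
    have hza : Subgroup.zpowers a = ⊤ :=
      (hdich _).resolve_left (by simpa [Subgroup.zpowers_eq_bot] using ha)
    have hb : b ∈ Subgroup.zpowers a := hza ▸ Subgroup.mem_top b
    obtain ⟨n, rfl⟩ := hb
    exact ((Commute.refl a).zpow_right n)
  constructor
  · intro g
    have : (QuotientGroup.mk' M) (g ^ p) = 1 := by
      rw [map_pow]
      exact hexp _
    exact (QuotientGroup.eq_one_iff _).mp this
  · rw [_root_.commutator_def, Subgroup.commutator_le]
    intro g1 _ g2 _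
    have : (QuotientGroup.mk' M) ⁅g1, g2⁆ = 1 := by
      rw [map_commutatorElement]
      exact commutatorElement_eq_one_iff_mul_comm.mpr (hcomm _ _)
    exact (QuotientGroup.eq_one_iff _).mp this

lemma aux_rank_le_of_ker_le_frattini {G Q : Type*} [Group G] [Finite G] [Group Q] [Finite Q]
    (f : G →* Q) (hf : Function.Surjective f) (hker : f.ker ≤ frattini G) :
    Group.rank G ≤ Group.rank Q := by
  obtain ⟨S, hcard, hgen⟩ := Group.rank_spec Q
  classical
  set T : Finset G := S.image (Function.surjInv hf) with hT
  have himg : f '' (T : Set G) = (S : Set Q) := by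
    ext y
    constructor
    · rintro ⟨x, hx, rfl⟩
      simp only [hT, Finset.coe_image, Set.mem_image, Finset.mem_coe] at hx
      obtain ⟨s, hs, rfl⟩ := hx
      rwa [Function.surjInv_eq hf]
    · intro hy
      refine ⟨Function.surjInv hf y, ?_, Function.surjInv_eq hf y⟩
      simp only [hT, Finset.coe_image, Set.mem_image, Finset.mem_coe]
      exact ⟨y, hy, rfl⟩
  have hmap : (closure (T : Set G)).map f = ⊤ := by
    rw [MonoidHom.map_closure, himg, hgen]
  have hsup : closure (T : Set G) ⊔ f.ker = ⊤ := by
    have h := congrArg (Subgroup.comap f) hmap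
    rwa [Subgroup.comap_map_eq, Subgroup.comap_top] at h
  have htop : closure (T : Set G) = ⊤ := by
    apply frattini_nongenerating
    rw [eq_top_iff, ← hsup]
    exact sup_le_sup_left hker _
  calc Group.rank G ≤ T.card := Group.rank_le htop
    _ ≤ S.card := Finset.card_image_le
    _ = Group.rank Q := hcard

/-- The cardinality of a finite elementary abelian `p`-group is `p ^ rank`. -/
lemma aux_card_eq_pow_rank {E : Type*} [CommGroup E] [Finite E] (hp : p.Prime)
    (hE : ∀ x : E, x ^ p = 1) : Nat.card E = p ^ Group.rank E := by
  haveI : Fact p.Prime := ⟨hp⟩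
  letI : Module (ZMod p) (Additive E) :=
    AddCommGroup.zmodModule (n := p) (fun x => hE x.toMul)
  classical
  haveI : Fintype E := Fintype.ofFinite E
  have hcard : Nat.card E = p ^ Module.finrank (ZMod p) (Additive E) := by
    have h := Module.card_eq_pow_finrank (K := ZMod p) (V := Additive E)
    rw [ZMod.card] at h
    rw [Nat.card_congr (Additive.ofMul (α := E)), Nat.card_eq_fintype_card]
    exact h
  suffices h : Group.rank E = Module.finrank (ZMod p) (Additive E) by rw [hcard, h]
  apply le_antisymm
  · -- rank ≤ finrank : a basis generates
    have b := Module.finBasis (ZMod p) (Additive E)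
    set S : Finset E := Finset.univ.image (fun i => Additive.toMul (b i)) with hS
    have hSgen : Subgroup.closure (S : Set E) = ⊤ := by
      rw [eq_top_iff]
      intro x _
      have hx : Additive.ofMul x ∈ Submodule.span (ZMod p) (Set.range ⇑b) := by
        rw [b.span_eq]; trivial
      have hle : Submodule.span (ZMod p) (Set.range ⇑b) ≤
          AddSubgroup.toZModSubmodule p ((Subgroup.closure (S : Set E)).toAddSubgroup) := by
        rw [Submodule.span_le]
        rintro _ ⟨i, rfl⟩
        show Additive.toMul (b i) ∈ Subgroup.closure (S : Set E)
        apply Subgroup.subset_closure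
        simp [hS]
      exact hle hx
    calc Group.rank E ≤ S.card := Group.rank_le hSgen
      _ ≤ Finset.univ.card := Finset.card_image_le
      _ = Module.finrank (ZMod p) (Additive E) := by simp
  · -- finrank ≤ rank : a generating set spans
    obtain ⟨S, hcard', hgen⟩ := Group.rank_spec E
    have hspan : Submodule.span (ZMod p)
        ((S.image (fun s : E => Additive.ofMul s) : Finset (Additive E)) : Set (Additive E)) = ⊤ := by
      rw [eq_top_iff]
      intro x _
      have hx : Additive.toMul x ∈ Subgroup.closure (S : Set E) := by rw [hgen]; trivial
      have hle : Subgroup.closure (S : Set E) ≤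
          Subgroup.toAddSubgroup.symm ((AddSubgroup.toZModSubmodule p).symm
            (Submodule.span (ZMod p)
              ((S.image (fun s : E => Additive.ofMul s) : Finset (Additive E)) : Set (Additive E)))) := by
        rw [Subgroup.closure_le]
        intro s hs
        show Additive.ofMul s ∈ Submodule.span (ZMod p) _
        apply Submodule.subset_span
        simp only [Finset.coe_image, Set.mem_image, Finset.mem_coe]
        exact ⟨s, hs, rfl⟩
      exact hle hx
    have h1 : Module.finrank (ZMod p) (Additive E) ≤
        (S.image (fun s : E => Additive.ofMul s)).card := by
      have h2 := finrank_span_finset_le_card (R := ZMod p)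
        (S.image (fun s : E => Additive.ofMul s))
      rw [Set.finrank, hspan, finrank_top] at h2
      exact h2
    calc Module.finrank (ZMod p) (Additive E) ≤ _ := h1
      _ ≤ S.card := Finset.card_image_le
      _ = Group.rank E := hcard'

end Aux

/-- If a finite `p`-group `G` is `d`-maximal for `A`-subgroups, then the Frattini
subgroup of `G` coincides with its commutator subgroup. -/
theorem stmt2 {p : ℕ} (hp : p.Prime) {A G : Type*} [Group A] [Group G] [Finite G]
    [MulDistribMulAction A G] (hG : IsPGroup p G) (hmax : DMax A G) :
    frattini G = _root_.commutator G := by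
  haveI : Fact p.Prime := ⟨hp⟩
  have hcommfr : _root_.commutator G ≤ frattini G :=
    aux_le_frattini (fun M hM => (aux_coatom hp hG hM).2)
  -- the abelianization
  set Q := Abelianization G with hQdef
  have hofsurj : Function.Surjective (Abelianization.of : G →* Q) := by
    intro y
    exact QuotientGroup.induction_on y fun g => ⟨g, rfl⟩
  have hofker : ∀ g : G, (Abelianization.of : G →* Q) g = 1 ↔ g ∈ _root_.commutator G := by
    intro g
    exact QuotientGroup.eq_one_iff g
  have hQp : IsPGroup p Q := hG.of_surjective _ hofsurj
  -- Step 1: every p-th power lies in the commutator subgroup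
  have hpow : ∀ g : G, g ^ p ∈ _root_.commutator G := by
    set φ : Q →* Q := powMonoidHom p with hφ
    set H : Subgroup G := φ.ker.comap (Abelianization.of : G →* Q) with hH
    have hHmem : ∀ g : G, g ∈ H ↔ g ^ p ∈ _root_.commutator G := by
      intro g
      rw [hH, Subgroup.mem_comap, MonoidHom.mem_ker, hφ, powMonoidHom_apply,
        ← map_pow, hofker]
    have hHtop : H = ⊤ := by
      by_contra hne
      have hinv : AInv A H := by
        intro a g hg
        rw [hHmem] at hg ⊢
        have h1 : (a • g) ^ p = a • g ^ p := (smul_pow' a g p).symm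
        rw [h1]
        have hchar := (Subgroup.characteristic_iff_map_eq
          (H := _root_.commutator G)).mp inferInstance (MulDistribMulAction.toMulAut A G a)
        rw [← hchar]
        exact ⟨g ^ p, hg, rfl⟩
      have hlt := hmax H hinv hne
      -- derive rank G ≤ rank H for a contradiction
      have h1 : Group.rank G ≤ Group.rank Q :=
        aux_rank_le_of_ker_le_frattini Abelianization.of hofsurj
          (by
            intro g hg
            rw [MonoidHom.mem_ker, hofker] at hg
            exact hcommfr hg)
      -- every coatom of Q contains φ.range
      have hrangefr : φ.range ≤ frattini Q := by
        apply aux_le_frattini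
        intro M hM
        rintro _ ⟨x, rfl⟩
        exact (aux_coatom hp hQp hM).1 x
      have h2 : Group.rank Q ≤ Group.rank (Q ⧸ φ.range) :=
        aux_rank_le_of_ker_le_frattini (QuotientGroup.mk' φ.range)
          (QuotientGroup.mk'_surjective φ.range)
          (by rw [QuotientGroup.ker_mk']; exact hrangefr)
      -- the two elementary abelian groups Q ⧸ φ.range and φ.ker have the same cardinality
      have hcards : Nat.card (Q ⧸ φ.range) = Nat.card φ.ker := by
        have ha : Nat.card Q = Nat.card (Q ⧸ φ.range) * Nat.card φ.range :=
          Subgroup.card_eq_card_quotient_mul_card_subgroup φ.range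
        have hb : Nat.card Q = Nat.card φ.ker * Nat.card φ.range := by
          have hiso := QuotientGroup.quotientKerEquivRange φ
          have := Subgroup.card_eq_card_quotient_mul_card_subgroup φ.ker
          rw [Nat.card_congr hiso.toEquiv] at this
          rw [this, mul_comm]
        have hpos : 0 < Nat.card φ.range := Nat.card_pos
        exact Nat.eq_of_mul_eq_mul_right hpos (by rw [← ha, ← hb])
      have hexp1 : ∀ x : Q ⧸ φ.range, x ^ p = 1 := by
        intro x
        obtain ⟨y, rfl⟩ := QuotientGroup.mk'_surjective φ.range x
        rw [← map_pow]
        exact (QuotientGroup.eq_one_iff _).mpr ⟨y, rfl⟩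
      have hexp2 : ∀ x : φ.ker, x ^ p = 1 := by
        rintro ⟨x, hx⟩
        rw [MonoidHom.mem_ker, hφ, powMonoidHom_apply] at hx
        ext
        simpa using hx
      have hr1 := aux_card_eq_pow_rank hp hexp1
      have hr2 := aux_card_eq_pow_rank hp hexp2
      have h3 : Group.rank (Q ⧸ φ.range) = Group.rank φ.ker := by
        have : (p : ℕ) ^ Group.rank (Q ⧸ φ.range) = p ^ Group.rank φ.ker := by
          rw [← hr1, ← hr2, hcards]
        exact Nat.pow_right_injective hp.two_le this
      -- H surjects onto φ.ker
      have h4 : Group.rank φ.ker ≤ Group.rank H := by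
        have hmapH : ∀ x : H, (Abelianization.of : G →* Q) x ∈ φ.ker := fun x => x.2
        set ψ : H →* φ.ker :=
          ((Abelianization.of : G →* Q).domRestrict H).codRestrict φ.ker hmapH with hψ
        have hψsurj : Function.Surjective ψ := by
          rintro ⟨y, hy⟩
          obtain ⟨g, rfl⟩ := hofsurj y
          have hgH : g ∈ H := by rw [hH, Subgroup.mem_comap]; exact hy
          exact ⟨⟨g, hgH⟩, rfl⟩
        exact Group.rank_le_of_surjective ψ hψsurj
      omega
    intro g
    rw [← hHmem]
    rw [hHtop]
    trivial
  -- Step 2: the abelianization is elementary abelian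
  have hexpQ : ∀ q : Q, q ^ p = 1 := by
    intro q
    obtain ⟨g, rfl⟩ := hofsurj q
    rw [← map_pow]
    exact (hofker _).mpr (hpow g)
  -- Module structure on the abelianization
  letI : Module (ZMod p) (Additive Q) :=
    AddCommGroup.zmodModule (n := p) (fun x => hexpQ x.toMul)
  refine le_antisymm ?_ hcommfr
  intro x hx
  by_contra hxN
  have hv : Additive.ofMul ((Abelianization.of : G →* Q) x) ≠ 0 := by
    intro h
    apply hxN
    rw [← hofker]
    exact h
  obtain ⟨f, hf⟩ : ∃ f : Module.Dual (ZMod p) (Additive Q),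
      f (Additive.ofMul ((Abelianization.of : G →* Q) x)) ≠ 0 := by
    by_contra hall
    push_neg at hall
    exact hv ((Module.forall_dual_apply_eq_zero_iff (ZMod p) _).mp hall)
  set ψ : Q →* Multiplicative (ZMod p) := AddMonoidHom.toMultiplicativeRight f.toAddMonoidHom with hψ
  set χ : G →* Multiplicative (ZMod p) := ψ.comp (Abelianization.of : G →* Q) with hχ
  have hχx : χ x ≠ 1 := by
    intro h
    apply hf
    have h2 : Multiplicative.toAdd (χ x) = 0 := by rw [h]; rfl
    exact h2
  -- χ.ker has index p
  have hχker : χ.ker.index = p := by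
    rw [Subgroup.index_ker]
    -- χ.range is a nontrivial subgroup of a group of order p
    have hdvd : Nat.card χ.range ∣ p := by
      have h1 := Subgroup.card_subgroup_dvd_card χ.range
      have h2 : Nat.card (Multiplicative (ZMod p)) = p := by
        rw [Nat.card_congr (Multiplicative.toAdd (α := ZMod p)), Nat.card_zmod]
      rwa [h2] at h1
    rcases (Nat.Prime.eq_one_or_self_of_dvd hp _ hdvd) with h1 | h1
    · exfalso
      have hbot := (Subgroup.card_le_one_iff_eq_bot (H := χ.range)).mp (le_of_eq h1)
      apply hχx
      have hmem : χ x ∈ χ.range := ⟨x, rfl⟩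
      rw [hbot] at hmem
      exact hmem
    · exact h1
  have hcoatom : IsCoatom χ.ker := aux_isCoatom_of_index_prime hp hχker
  have hxker : x ∈ χ.ker := frattini_le_coatom hcoatom hx
  rw [MonoidHom.mem_ker] at hxker
  exact hχx hxker
end

section
/- Let G be a finite p-group acted on by a group A, and suppose G is d-maximal for A-subgroups. Then every factor γ_n(G)/γ_{n+1}(G) of the lower central series of G is elementary abelian. -/
open scoped commutatorElement

/-!
Since `γ_{n+1}(G) = [γ_n(G), G]`, only the `p`-th powers need an argument.

For `γ_1/γ_2`, let `B = G/G'` and let `H = {g | g^p ∈ G'}` be the preimage of `Ω₁(B)`; it is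
`A`-invariant. Burnside's basis theorem gives `d(G) ≤ d(B/B^p)`. The groups `B/B^p` and `Ω₁(B)`
are elementary abelian of the same order (the cokernel and the kernel of `b ↦ b^p`), hence of the
same rank, and `Ω₁(B)` is a quotient of `H`. So `d(G) ≤ d(H)`, and `d`-maximality forces `H = G`.

For the induction step, commutators `⁅x, y⁆` with `x ∈ γ_n` are central modulo `γ_{n+2}`, so
`⁅x, y⁆^p ≡ ⁅x^p, y⁆ ≡ 1`; as `γ_{n+1}/γ_{n+2}` is abelian, exponent `p` on generators suffices.
-/

open Subgroup

theorem Submodule.toAddSubgroup_span_zmod {n : ℕ} {M : Type*} [AddCommGroup M]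
    [Module (ZMod n) M] (s : Set M) : (span (ZMod n) s).toAddSubgroup = AddSubgroup.closure s :=
  le_antisymm
    (fun _ hx ↦ (span_le (p := AddSubgroup.toZModSubmodule n (.closure s))).2
      AddSubgroup.subset_closure hx)
    ((AddSubgroup.closure_le _).2 subset_span)

section ElementaryAbelian

variable {p : ℕ} {W : Type*} [CommGroup W]

theorem Subgroup.closure_eq_top_iff_span_zmod [Module (ZMod p) (Additive W)] (S : Set W) :
    closure S = ⊤ ↔ Submodule.span (ZMod p) (Additive.toMul ⁻¹' S) = ⊤ := by
  rw [← Submodule.toAddSubgroup_inj, Submodule.toAddSubgroup_span_zmod,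
    Submodule.top_toAddSubgroup, ← toAddSubgroup_closure, ← toAddSubgroup.map_top,
    toAddSubgroup.injective.eq_iff]

theorem Group.rank_eq_finrank_zmod [Fact p.Prime] [Finite W] [Module (ZMod p) (Additive W)] :
    Group.rank W = Module.finrank (ZMod p) (Additive W) := by
  classical
  apply le_antisymm
  · let b := Module.finBasis (ZMod p) (Additive W)
    have hb : closure (Set.range fun i ↦ (b i).toMul) = ⊤ := by
      rw [closure_eq_top_iff_span_zmod (p := p)]
      simpa [Set.preimage, Set.range] using b.span_eq
    calc Group.rank W ≤ (Finset.univ.image fun i ↦ (b i).toMul).card :=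
          Group.rank_le (by simpa using hb)
      _ ≤ _ := Finset.card_image_le.trans (by simp)
  · obtain ⟨S, hcard, hS⟩ := Group.rank_spec W
    rw [closure_eq_top_iff_span_zmod (p := p)] at hS
    calc Module.finrank (ZMod p) (Additive W)
        = Module.finrank (ZMod p) (Submodule.span (ZMod p) (Additive.toMul ⁻¹' (S : Set W))) := by
          rw [hS, finrank_top]
      _ ≤ S.card := by
          have := finrank_span_finset_le_card (R := ZMod p) (S.map Additive.ofMul.toEmbedding)
          rwa [Finset.coe_map, Equiv.coe_toEmbedding, Equiv.image_eq_preimage_symm,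
            Finset.card_map] at this
      _ = Group.rank W := hcard

theorem CommGroup.card_eq_pow_rank_of_pow_eq_one (hp : p.Prime) [Finite W]
    (hW : ∀ a : W, a ^ p = 1) : Nat.card W = p ^ Group.rank W := by
  have := Fact.mk hp
  let _ : Module (ZMod p) (Additive W) := AddCommGroup.zmodModule fun a ↦ hW a.toMul
  have hfin : Module.Finite (ZMod p) (Additive W) := Module.Finite.of_finite
  rw [Group.rank_eq_finrank_zmod (p := p)]
  calc Nat.card W = Nat.card (ZMod p) ^ Module.finrank (ZMod p) (Additive W) :=
        @Module.natCard_eq_pow_finrank (ZMod p) (Additive W) _ _ _ hfin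
    _ = _ := by rw [Nat.card_zmod]

end ElementaryAbelian

theorem MonoidHom.card_quotient_range_eq_card_ker {B : Type*} [Group B] [Finite B]
    (f : B →* B) : Nat.card (B ⧸ f.range) = Nat.card f.ker := by
  have hrange := card_eq_card_quotient_mul_card_subgroup f.range
  have hker := card_eq_card_quotient_mul_card_subgroup f.ker
  rw [Nat.card_congr (QuotientGroup.quotientKerEquivRange f).toEquiv, hrange, mul_comm] at hker
  exact Nat.eq_of_mul_eq_mul_left Nat.card_pos hker

theorem CommGroup.rank_quotient_range_pow_eq_rank_ker_pow {p : ℕ} (hp : p.Prime) {B : Type*}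
    [CommGroup B] [Finite B] :
    Group.rank (B ⧸ (powMonoidHom p : B →* B).range) =
      Group.rank (powMonoidHom p : B →* B).ker := by
  refine Nat.pow_right_injective hp.two_le ?_
  have hquot : ∀ a : B ⧸ (powMonoidHom p : B →* B).range, a ^ p = 1 := by
    rintro ⟨b⟩
    exact (QuotientGroup.eq_one_iff _).2 ⟨b, rfl⟩
  have hker : ∀ a : (powMonoidHom p : B →* B).ker, a ^ p = 1 := fun a ↦ Subtype.ext a.2
  simp only [← CommGroup.card_eq_pow_rank_of_pow_eq_one hp hquot,
    ← CommGroup.card_eq_pow_rank_of_pow_eq_one hp hker,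
    MonoidHom.card_quotient_range_eq_card_ker]

theorem Abelianization.of_surjective {G : Type*} [Group G] :
    Function.Surjective (Abelianization.of : G →* Abelianization G) :=
  QuotientGroup.mk_surjective

section Frattini

variable {G : Type*} [Group G] [Finite G]

theorem Group.rank_le_of_surjective_of_ker_le_frattini {Q : Type*} [Group Q] [Group.FG Q]
    (ψ : G →* Q) (hψ : Function.Surjective ψ) (hker : ψ.ker ≤ frattini G) :
    Group.rank G ≤ Group.rank Q := by
  classical
  obtain ⟨S, hcard, hS⟩ := Group.rank_spec Q
  choose l hl using hψ
  have hT : closure ((S.image l : Finset G) : Set G) = ⊤ := by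
    refine frattini_nongenerating (top_le_iff.1 ?_)
    calc ⊤ = comap ψ (map ψ (closure ((S.image l : Finset G) : Set G))) := by
          simp only [MonoidHom.map_closure, Finset.coe_image, Set.image_image, hl, Set.image_id',
            hS, comap_top]
      _ = Subgroup.closure _ ⊔ ψ.ker := comap_map_eq _ _
      _ ≤ _ := sup_le_sup_left hker _
  calc Group.rank G ≤ (S.image l).card := Group.rank_le hT
    _ ≤ S.card := Finset.card_image_le
    _ = Group.rank Q := hcard

variable {p : ℕ} [Fact p.Prime]

theorem IsPGroup.card_quotient_eq_of_isCoatom (hG : IsPGroup p G) {M : Subgroup G} [M.Normal]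
    (hM : IsCoatom M) : Nat.card (G ⧸ M) = p := by
  obtain ⟨n, hn, hcard⟩ := (hG.to_quotient M).nontrivial_iff_card.1
    (QuotientGroup.nontrivial_iff.2 hM.1)
  obtain ⟨g, hg⟩ := exists_prime_orderOf_dvd_card' (G := G ⧸ M) p
    (hcard ▸ dvd_pow_self p hn.ne')
  obtain ⟨x, rfl⟩ := QuotientGroup.mk_surjective g
  have hx : x ∉ M := fun hx ↦ (Fact.out : p.Prime).one_lt.ne' <| by
    rw [← hg, (QuotientGroup.eq_one_iff x).2 hx, orderOf_one]
  have hcomap : comap (QuotientGroup.mk' M) (zpowers (x : G ⧸ M)) = ⊤ :=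
    hM.2 _ (SetLike.lt_iff_le_and_exists.2 ⟨QuotientGroup.le_comap_mk' M _, x, mem_zpowers _, hx⟩)
  have htop : zpowers (x : G ⧸ M) = ⊤ := by
    rw [← map_comap_eq_self_of_surjective (QuotientGroup.mk'_surjective M) (zpowers _), hcomap,
      ← MonoidHom.range_eq_map, MonoidHom.range_eq_top.2 (QuotientGroup.mk'_surjective M)]
  rw [← card_top (G := G ⧸ M), ← htop, Nat.card_zpowers, hg]

theorem IsPGroup.normal_of_isCoatom (hG : IsPGroup p G) {M : Subgroup G} (hM : IsCoatom M) :
    M.Normal :=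
  have := hG.isNilpotent
  NormalizerCondition.normal_of_coatom M Group.normalizerCondition_of_isNilpotent hM

theorem IsPGroup.commutator_le_of_isCoatom (hG : IsPGroup p G) {M : Subgroup G}
    (hM : IsCoatom M) : commutator G ≤ M := by
  have := hG.normal_of_isCoatom hM
  have := isCyclic_of_prime_card (hG.card_quotient_eq_of_isCoatom hM)
  let _ : CommGroup (G ⧸ M) := IsCyclic.commGroup
  simpa using Abelianization.commutator_subset_ker (QuotientGroup.mk' M)

theorem IsPGroup.pow_mem_of_isCoatom (hG : IsPGroup p G) {M : Subgroup G}
    (hM : IsCoatom M) (x : G) : x ^ p ∈ M := by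
  have := hG.normal_of_isCoatom hM
  rw [← QuotientGroup.eq_one_iff, QuotientGroup.mk_pow, ← hG.card_quotient_eq_of_isCoatom hM]
  exact pow_card_eq_one'

theorem IsPGroup.rank_le_rank_quotient_range_pow (hG : IsPGroup p G) :
    Group.rank G ≤
      Group.rank (Abelianization G ⧸ (powMonoidHom p : Abelianization G →* _).range) := by
  refine Group.rank_le_of_surjective_of_ker_le_frattini
    ((QuotientGroup.mk' _).comp Abelianization.of)
    ((QuotientGroup.mk'_surjective _).comp Abelianization.of_surjective) fun g hg ↦ ?_
  obtain ⟨z', hz'⟩ : Abelianization.of g ∈ (powMonoidHom p).range := by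
    simpa using hg
  obtain ⟨z, rfl⟩ := Abelianization.of_surjective z'
  have hcomm : g * (z ^ p)⁻¹ ∈ commutator G := by
    rw [← Abelianization.ker_of, MonoidHom.mem_ker]
    simp [← hz']
  simp only [frattini, Order.radical, mem_iInf]
  intro M hM
  simpa using mul_mem (hG.commutator_le_of_isCoatom hM hcomm) (hG.pow_mem_of_isCoatom hM z)

end Frattini

theorem Subgroup.Characteristic.smul_mem {A G : Type*} [Group A] [Group G]
    [MulDistribMulAction A G] {H : Subgroup G} [hH : H.Characteristic] (a : A) {g : G}
    (hg : g ∈ H) : a • g ∈ H := by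
  rw [← hH.fixed (MulDistribMulAction.toMulAut A G a⁻¹)]
  simpa using hg

theorem DMax.pow_mem_commutator {p : ℕ} (hp : p.Prime) {A G : Type*} [Group A] [Group G]
    [Finite G] [MulDistribMulAction A G] (hG : IsPGroup p G) (hmax : DMax A G) (x : G) :
    x ^ p ∈ commutator G := by
  have := Fact.mk hp
  set H := (powMonoidHom p : Abelianization G →* _).ker.comap Abelianization.of
  have hH : ∀ g, g ∈ H ↔ g ^ p ∈ commutator G := fun g ↦ by
    simp [H, ← Abelianization.ker_of]
  have hinv : AInv A H := fun a g hg ↦ by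
    rw [hH] at hg ⊢
    rw [← smul_pow']
    exact Characteristic.smul_mem a hg
  have hrank : Group.rank G ≤ Group.rank H :=
    calc Group.rank G ≤ _ := hG.rank_le_rank_quotient_range_pow
      _ = _ := CommGroup.rank_quotient_range_pow_eq_rank_ker_pow hp
      _ ≤ Group.rank H := Group.rank_le_of_surjective _
          (MonoidHom.subgroupComap_surjective_of_surjective _ _ Abelianization.of_surjective)
  have htop : H = ⊤ := by
    by_contra hne
    exact (hmax H hinv hne).not_ge hrank
  exact (hH x).1 (htop ▸ mem_top x)

theorem commutatorElement_pow_left_of_commute {G : Type*} [Group G] {x y : G}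
    (h : Commute x ⁅x, y⁆) (k : ℕ) : ⁅x ^ k, y⁆ = ⁅x, y⁆ ^ k := by
  induction k with
  | zero => simp
  | succ k ih =>
    rw [pow_succ', commutatorElement_mul_left_eq_conj_mul, ih, (h.pow_right k).eq,
      mul_inv_cancel_right, pow_succ]

theorem Subgroup.pow_mem_commutator_commutator_of_pow_mem_commutator {G : Type*} [Group G]
    {N : Subgroup G} [N.Normal] {n : ℕ} (h : ∀ x ∈ N, x ^ n ∈ ⁅N, (⊤ : Subgroup G)⁆) :
    ∀ z ∈ ⁅N, (⊤ : Subgroup G)⁆, z ^ n ∈ ⁅⁅N, (⊤ : Subgroup G)⁆, (⊤ : Subgroup G)⁆ := by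
  set L := ⁅⁅N, (⊤ : Subgroup G)⁆, (⊤ : Subgroup G)⁆
  set π := QuotientGroup.mk' L
  have hπ : ∀ g, π g = 1 ↔ g ∈ L := fun g ↦ QuotientGroup.eq_one_iff g
  have hcentral : ∀ a ∈ ⁅N, (⊤ : Subgroup G)⁆, ∀ b : G, Commute (π a) (π b) := fun a ha b ↦ by
    rw [← commutatorElement_eq_one_iff_commute, ← map_commutatorElement, hπ]
    exact commutator_mem_commutator ha (mem_top b)
  have hgen : ∀ x ∈ N, ∀ y : G, ⁅x, y⁆ ^ n ∈ L := fun x hx y ↦ by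
    have hxy := hcentral _ (commutator_mem_commutator hx (mem_top y)) x
    rw [← hπ, map_pow, map_commutatorElement, ← commutatorElement_pow_left_of_commute,
      ← map_pow, ← map_commutatorElement, hπ]
    · exact commutator_mem_commutator (h x hx) (mem_top y)
    · rw [← map_commutatorElement]
      exact hxy.symm
  intro z hz
  rw [commutator_def] at hz
  induction hz using closure_induction with
  | mem _ hc =>
    obtain ⟨x, hx, y, -, rfl⟩ := hc
    exact hgen x hx y
  | one => simp
  | mul a b ha hb iha ihb =>
    rw [← hπ] at iha ihb ⊢
    rw [map_pow, map_mul, (hcentral a _ b).mul_pow, ← map_pow, ← map_pow, iha, ihb, one_mul]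
    rwa [commutator_def]
  | inv a _ iha => simpa using inv_mem iha

/-- `(⊤ : Subgroup G).lowerCentralSeries n` is `γ_{n+1}(G)`. -/
theorem stmt3 {p : ℕ} (hp : p.Prime) {A G : Type*} [Group A] [Group G] [Finite G]
    [MulDistribMulAction A G] (hG : IsPGroup p G) (hmax : DMax A G) :
    ∀ n : ℕ, ∀ x y : G, x ∈ (⊤ : Subgroup G).lowerCentralSeries n → y ∈ (⊤ : Subgroup G).lowerCentralSeries n →
      ⁅x, y⁆ ∈ (⊤ : Subgroup G).lowerCentralSeries (n + 1) ∧ x ^ p ∈ (⊤ : Subgroup G).lowerCentralSeries (n + 1) := by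
  have hpow : ∀ n, ∀ x ∈ (⊤ : Subgroup G).lowerCentralSeries n,
      x ^ p ∈ (⊤ : Subgroup G).lowerCentralSeries (n + 1) := by
    intro n
    induction n with
    | zero =>
      intro x _
      rw [top_lowerCentralSeries_one]
      exact hmax.pow_mem_commutator hp hG x
    | succ n ih => exact pow_mem_commutator_commutator_of_pow_mem_commutator ih
  intro n x y hx _
  exact ⟨commutator_mem_commutator hx (mem_top y), hpow n x hx⟩
end

section
/- Let G be a finite p-group acted on by a group A, and suppose G is d-maximal for A-subgroups with d(G)=r. Then every A-invariant subgroup M of index p in G satisfies d(M) = r - 1. -/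
/-- If `G` is `d`-maximal for `A`-subgroups with `d(G) = r`, then every `A`-invariant
subgroup of index `p` satisfies `d(M) = r - 1`. -/
theorem stmt4 {p : ℕ} (hp : p.Prime) {A G : Type*} [Group A] [Group G] [Finite G]
    [MulDistribMulAction A G] (hG : IsPGroup p G) (hmax : DMax A G)
    {r : ℕ} (hr : Group.rank G = r)
    (M : Subgroup G) (hMinv : AInv A M) (hM : M.index = p) :
    Group.rank M = r - 1 := by
  classical
  have hMne : M ≠ ⊤ := by
    intro h
    rw [h, Subgroup.index_top] at hM
    exact hp.one_lt.ne' hM.symm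
  have hlt : Group.rank M < r := hr ▸ hmax M hMinv hMne
  -- pick generators of M
  obtain ⟨S, hS1, hS2⟩ := Group.rank_spec M
  have hclS' : Subgroup.closure ((S.image (Subtype.val) : Finset G) : Set G) = M := by
    rw [Finset.coe_image]
    show Subgroup.closure (⇑M.subtype '' ↑S) = M
    rw [← MonoidHom.map_closure, hS2, ← MonoidHom.range_eq_map, Subgroup.range_subtype]
  -- pick g outside M
  obtain ⟨g, hg⟩ : ∃ g : G, g ∉ M := by
    by_contra h
    push_neg at h
    exact hMne ((Subgroup.eq_top_iff' M).mpr h)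
  set N : Subgroup G := Subgroup.closure (insert g ((S.image Subtype.val : Finset G) : Set G)) with hNdef
  have hMN : M ≤ N := by
    rw [← hclS']
    exact Subgroup.closure_mono (Set.subset_insert _ _)
  have hgN : g ∈ N := Subgroup.subset_closure (Set.mem_insert _ _)
  have hNM : ¬ N ≤ M := fun h => hg (h hgN)
  have hmul : M.relIndex N * N.index = p := hM ▸ Subgroup.relIndex_mul_index hMN
  have hNd : N.index ∣ p := ⟨M.relIndex N, by rw [← hmul, mul_comm]⟩
  have hNtop : N = ⊤ := by
    rcases (Nat.Prime.eq_one_or_self_of_dvd hp _ hNd) with h1 | h1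
    · exact Subgroup.index_eq_one.mp h1
    · rw [h1, Nat.mul_eq_right hp.ne_zero] at hmul
      exact absurd (Subgroup.relIndex_eq_one.mp hmul) hNM
  have hcl : Subgroup.closure ((insert g (S.image Subtype.val) : Finset G) : Set G) = ⊤ := by
    rw [Finset.coe_insert]; exact hNtop
  have hge : r ≤ Group.rank M + 1 := by
    calc r = Group.rank G := hr.symm
    _ ≤ (insert g (S.image Subtype.val) : Finset G).card := Group.rank_le hcl
    _ ≤ (S.image Subtype.val).card + 1 := Finset.card_insert_le _ _
    _ ≤ Group.rank M + 1 := by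
        rw [← hS1]; exact Nat.add_le_add_right Finset.card_image_le 1
  omega
end

section
/- Let G be a finite 2-group and N ≤ G^2 a subgroup with [N,G] ≤ N^2. Then [N, G^2] ≤ (N^2)^2. In particular, N is almost powerfully embedded in G. -/
/-- The subgroup generated by the squares of elements of `H`. -/
def Subgroup.sq {G : Type*} [Group G] (H : Subgroup G) : Subgroup G :=
  Subgroup.closure ((fun x => x ^ 2) '' (H : Set G))

open scoped commutatorElement

namespace KahnAux

open Subgroup

variable {G : Type*} [Group G]

lemma mem_sq {H : Subgroup G} {x : G} (hx : x ∈ H) : x ^ 2 ∈ H.sq :=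
  Subgroup.subset_closure ⟨x, hx, rfl⟩

lemma sq_le {H K : Subgroup G} (h : ∀ x ∈ H, x ^ 2 ∈ K) : H.sq ≤ K := by
  refine (Subgroup.closure_le K).2 ?_
  rintro _ ⟨x, hx, rfl⟩; exact h x hx

lemma sq_le_self (H : Subgroup G) : H.sq ≤ H :=
  sq_le fun x hx => H.pow_mem hx 2

lemma sq_normal (H : Subgroup G) [hH : H.Normal] : H.sq.Normal := by
  constructor
  intro m hm g
  induction hm using closure_induction with
  | mem x hx =>
    obtain ⟨y, hy, rfl⟩ := hx
    have : g * y ^ 2 * g⁻¹ = (g * y * g⁻¹) ^ 2 := by rw [pow_two, pow_two]; group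
    rw [this]
    exact mem_sq (hH.conj_mem y hy g)
  | one => simpa using H.sq.one_mem
  | mul x y _ _ hx hy =>
    have : g * (x * y) * g⁻¹ = (g * x * g⁻¹) * (g * y * g⁻¹) := by group
    rw [this]; exact H.sq.mul_mem hx hy
  | inv x _ hx =>
    have : g * x⁻¹ * g⁻¹ = (g * x * g⁻¹)⁻¹ := by group
    rw [this]; exact H.sq.inv_mem hx

/-- commutator with a closure on the left, target normal. -/
lemma commutator_closure_left_le {S : Set G} {K T : Subgroup G} [hT : T.Normal]
    (h : ∀ s ∈ S, ∀ k ∈ K, ⁅s, k⁆ ∈ T) : ⁅Subgroup.closure S, K⁆ ≤ T := by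
  rw [Subgroup.commutator_le]
  intro g hg
  induction hg using closure_induction with
  | mem x hx => exact h x hx
  | one => intro k hk; simpa using T.one_mem
  | mul x y _ _ hx hy =>
    intro k hk
    have : ⁅x * y, k⁆ = x * ⁅y, k⁆ * x⁻¹ * ⁅x, k⁆ := by group
    rw [this]
    exact T.mul_mem (hT.conj_mem _ (hy k hk) x) (hx k hk)
  | inv x _ hx =>
    intro k hk
    have : ⁅x⁻¹, k⁆ = x⁻¹ * ⁅x, k⁆⁻¹ * x := by group
    rw [this]
    simpa using hT.conj_mem _ (T.inv_mem (hx k hk)) x⁻¹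

/-- commutator with a closure on the right, target normal. -/
lemma commutator_closure_right_le {S : Set G} {K T : Subgroup G} [hT : T.Normal]
    (h : ∀ k ∈ K, ∀ s ∈ S, ⁅k, s⁆ ∈ T) : ⁅K, Subgroup.closure S⁆ ≤ T := by
  rw [Subgroup.commutator_comm, Subgroup.commutator_le]
  intro g hg
  induction hg using closure_induction with
  | mem x hx =>
    intro k hk
    have : ⁅x, k⁆ = ⁅k, x⁆⁻¹ := by group
    rw [this]; exact T.inv_mem (h k hk x hx)
  | one => intro k hk; simpa using T.one_mem
  | mul x y _ _ hx hy =>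
    intro k hk
    have : ⁅x * y, k⁆ = x * ⁅y, k⁆ * x⁻¹ * ⁅x, k⁆ := by group
    rw [this]
    exact T.mul_mem (hT.conj_mem _ (hy k hk) x) (hx k hk)
  | inv x _ hx =>
    intro k hk
    have : ⁅x⁻¹, k⁆ = x⁻¹ * ⁅x, k⁆⁻¹ * x := by group
    rw [this]
    simpa using hT.conj_mem _ (T.inv_mem (hx k hk)) x⁻¹

lemma commutator_sup_left_le {H K L T : Subgroup G} [T.Normal]
    (h1 : ⁅H, L⁆ ≤ T) (h2 : ⁅K, L⁆ ≤ T) : ⁅H ⊔ K, L⁆ ≤ T := by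
  have hsup : H ⊔ K = Subgroup.closure ((H : Set G) ∪ (K : Set G)) := by
    rw [Subgroup.closure_union, Subgroup.closure_eq, Subgroup.closure_eq]
  rw [hsup]
  apply commutator_closure_left_le
  rintro s (hs | hs) l hl
  · exact h1 (Subgroup.commutator_mem_commutator hs hl)
  · exact h2 (Subgroup.commutator_mem_commutator hs hl)

end KahnAux

open Subgroup KahnAux in
/-- Kahn: if `N ≤ G²` and `[N,G] ≤ N²`, then `[N,G²] ≤ (N²)²`; in particular `N` is
almost powerfully embedded in `G` (i.e. `[N,G] ≤ N²` and `[N,N] ≤ (N²)²`). -/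
theorem stmt9 {G : Type*} [Group G] [Finite G] (hG : IsPGroup 2 G)
    (N : Subgroup G) (hN : N ≤ Subgroup.sq ⊤)
    (hNG : ⁅N, (⊤ : Subgroup G)⁆ ≤ N.sq) :
    ⁅N, Subgroup.sq (⊤ : Subgroup G)⁆ ≤ N.sq.sq ∧
      (⁅N, (⊤ : Subgroup G)⁆ ≤ N.sq ∧ ⁅N, N⁆ ≤ N.sq.sq) := by
  haveI fact2 : Fact (Nat.Prime 2) := ⟨Nat.prime_two⟩
  have hMN : N.sq ≤ N := sq_le_self N
  -- N is normal
  haveI hNnorm : N.Normal := by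
    constructor
    intro n hn g
    have h1 : ⁅g, n⁆ ∈ N := by
      refine hMN (hNG ?_)
      rw [Subgroup.commutator_comm]
      exact Subgroup.commutator_mem_commutator (Subgroup.mem_top g) hn
    have : g * n * g⁻¹ = ⁅g, n⁆ * n := by group
    rw [this]; exact N.mul_mem h1 hn
  haveI hMnorm : N.sq.Normal := sq_normal N
  haveI hKnorm : N.sq.sq.Normal := sq_normal N.sq
  set M := N.sq with hMdef
  set K := N.sq.sq with hKdef
  set P := ⁅M, (⊤ : Subgroup G)⁆ with hPdef
  haveI : P.Normal := Subgroup.commutator_normal M ⊤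
  haveI : (⁅N, M⁆).Normal := Subgroup.commutator_normal N M
  haveI : (⁅P, (⊤ : Subgroup G)⁆).Normal := Subgroup.commutator_normal P ⊤
  -- Step A : [M, G] ≤ [N, M] ⊔ K
  have stepA : P ≤ ⁅N, M⁆ ⊔ K := by
    apply commutator_closure_left_le
    rintro _ ⟨n, hn, rfl⟩ g -
    set b := ⁅n, g⁆ with hb
    have hbM : b ∈ M := hNG (Subgroup.commutator_mem_commutator hn (Subgroup.mem_top g))
    have hbnM : n * b * n⁻¹ ∈ M := hMnorm.conj_mem b hbM n
    have h1 : (n * b * n⁻¹) ^ 2 ∈ K := mem_sq hbnM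
    have h2 : ⁅n, b⁻¹⁆ ∈ ⁅N, M⁆ :=
      Subgroup.commutator_mem_commutator hn (M.inv_mem hbM)
    have key : ⁅n ^ 2, g⁆ = (n * b * n⁻¹) ^ 2 * ⁅n, b⁻¹⁆ := by
      rw [hb, pow_two, pow_two]; group
    rw [key]
    exact mul_mem (Subgroup.mem_sup_right h1) (Subgroup.mem_sup_left h2)
  -- Step B : [N, G²] ≤ P ⊔ K
  have stepB : ⁅N, Subgroup.sq (⊤ : Subgroup G)⁆ ≤ P ⊔ K := by
    apply commutator_closure_right_le
    rintro n hn _ ⟨g, -, rfl⟩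
    set a := ⁅n, g⁆ with ha
    have haM : a ∈ M := hNG (Subgroup.commutator_mem_commutator hn (Subgroup.mem_top g))
    have h1 : a ^ 2 ∈ K := mem_sq haM
    have h2 : ⁅a⁻¹, g⁆ ∈ P :=
      Subgroup.commutator_mem_commutator (M.inv_mem haM) (Subgroup.mem_top g)
    have key : ⁅n, g ^ 2⁆ = a ^ 2 * ⁅a⁻¹, g⁆ := by rw [ha, pow_two, pow_two]; group
    rw [key]
    exact mul_mem (Subgroup.mem_sup_right h1) (Subgroup.mem_sup_left h2)
  -- Step C : [M, G²] ≤ [P, G] ⊔ K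
  have stepC : ⁅M, Subgroup.sq (⊤ : Subgroup G)⁆ ≤ ⁅P, (⊤ : Subgroup G)⁆ ⊔ K := by
    apply commutator_closure_right_le
    rintro m hm _ ⟨g, -, rfl⟩
    set c := ⁅m, g⁆ with hc
    have hcP : c ∈ P := Subgroup.commutator_mem_commutator hm (Subgroup.mem_top g)
    have hcM : c ∈ M := Subgroup.commutator_le_left M ⊤ hcP
    have h1 : c ^ 2 ∈ K := mem_sq hcM
    have h2 : ⁅c⁻¹, g⁆ ∈ ⁅P, (⊤ : Subgroup G)⁆ :=
      Subgroup.commutator_mem_commutator (P.inv_mem hcP) (Subgroup.mem_top g)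
    have key : ⁅m, g ^ 2⁆ = c ^ 2 * ⁅c⁻¹, g⁆ := by rw [hc, pow_two, pow_two]; group
    rw [key]
    exact mul_mem (Subgroup.mem_sup_right h1) (Subgroup.mem_sup_left h2)
  -- P ≤ [P, G] ⊔ K
  have stepD : P ≤ ⁅P, (⊤ : Subgroup G)⁆ ⊔ K := by
    refine stepA.trans (sup_le ?_ le_sup_right)
    calc ⁅N, M⁆ ≤ ⁅Subgroup.sq (⊤ : Subgroup G), M⁆ := Subgroup.commutator_mono hN le_rfl
      _ = ⁅M, Subgroup.sq (⊤ : Subgroup G)⁆ := Subgroup.commutator_comm _ _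
      _ ≤ ⁅P, (⊤ : Subgroup G)⁆ ⊔ K := stepC
  -- Iterate down the lower central series
  have hlcs : ∀ k, P ≤ Subgroup.lowerCentralSeries (⊤ : Subgroup G) k ⊔ K := by
    intro k
    induction k with
    | zero => exact le_sup_left.trans' le_top
    | succ k ih =>
      refine stepD.trans (sup_le ?_ le_sup_right)
      have hsucc : Subgroup.lowerCentralSeries (⊤ : Subgroup G) (k + 1) = ⁅Subgroup.lowerCentralSeries (⊤ : Subgroup G) k, (⊤ : Subgroup G)⁆ := rfl
      calc ⁅P, (⊤ : Subgroup G)⁆ ≤ ⁅Subgroup.lowerCentralSeries (⊤ : Subgroup G) k ⊔ K, (⊤ : Subgroup G)⁆ :=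
            Subgroup.commutator_mono ih le_rfl
        _ ≤ Subgroup.lowerCentralSeries (⊤ : Subgroup G) (k + 1) ⊔ K := by
            apply commutator_sup_left_le
            · rw [hsucc]; exact le_sup_left
            · exact (Subgroup.commutator_le_left K ⊤).trans le_sup_right
  haveI : Group.IsNilpotent G := hG.isNilpotent
  obtain ⟨k, hk⟩ := _root_.nilpotent_iff_lowerCentralSeries.mp this
  have hPK : P ≤ K := by
    have := hlcs k
    rwa [hk, bot_sup_eq] at this
  have main : ⁅N, Subgroup.sq (⊤ : Subgroup G)⁆ ≤ K := stepB.trans (sup_le hPK le_rfl)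
  exact ⟨main, hNG, (Subgroup.commutator_mono le_rfl hN).trans main⟩
end

section
/- Let G be a finite 2-group and N a normal subgroup of G that is almost powerfully embedded in G. Then both N^2 and [N,G] are almost powerfully embedded in G. -/
/-- `N` is almost powerfully embedded in the `2`-group `G`. -/
def APE {G : Type*} [Group G] (N : Subgroup G) : Prop :=
  ⁅N, (⊤ : Subgroup G)⁆ ≤ N.sq ∧ ⁅N, N⁆ ≤ N.sq.sq

namespace APEAux

open Subgroup
open scoped commutatorElement

variable {G : Type*} [Group G]

lemma sq_le_self (H : Subgroup G) : H.sq ≤ H := by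
  apply (Subgroup.closure_le _).mpr
  rintro _ ⟨x, hx, rfl⟩
  exact pow_mem hx 2

lemma mem_sq {H : Subgroup G} {x : G} (hx : x ∈ H) : x ^ 2 ∈ H.sq :=
  Subgroup.subset_closure ⟨x, hx, rfl⟩

lemma sq_normal (H : Subgroup G) [hH : H.Normal] : H.sq.Normal := by
  constructor
  intro n hn g
  induction hn using Subgroup.closure_induction with
  | mem x hx =>
    obtain ⟨y, hy, rfl⟩ := hx
    have : g * y ^ 2 * g⁻¹ = (g * y * g⁻¹) ^ 2 := by simp only [pow_two]; group
    rw [this]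
    exact mem_sq (hH.conj_mem y hy g)
  | one => simpa using one_mem _
  | mul x y _ _ hx hy =>
    have : g * (x * y) * g⁻¹ = (g * x * g⁻¹) * (g * y * g⁻¹) := by group
    rw [this]; exact mul_mem hx hy
  | inv x _ hx =>
    have : g * x⁻¹ * g⁻¹ = (g * x * g⁻¹)⁻¹ := by group
    rw [this]; exact inv_mem hx

/-- Reducing a commutator bound to generators of the left subgroup. -/
lemma closure_commutator_le {S : Set G} {C T : Subgroup G} [hT : T.Normal]
    (h : ∀ s ∈ S, ∀ c ∈ C, ⁅s, c⁆ ∈ T) : ⁅Subgroup.closure S, C⁆ ≤ T := by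
  rw [Subgroup.commutator_le]
  intro g hg c hc
  induction hg using Subgroup.closure_induction with
  | mem x hx => exact h x hx c hc
  | one =>
    have : ⁅(1 : G), c⁆ = 1 := by group
    rw [this]; exact one_mem _
  | mul x y _ _ hx hy =>
    have : ⁅x * y, c⁆ = (x * ⁅y, c⁆ * x⁻¹) * ⁅x, c⁆ := by
      simp only [commutatorElement_def]; group
    rw [this]
    exact mul_mem (hT.conj_mem _ hy x) hx
  | inv x _ hx =>
    have : ⁅x⁻¹, c⁆ = x⁻¹ * ⁅x, c⁆⁻¹ * (x⁻¹)⁻¹ := by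
      simp only [commutatorElement_def]; group
    rw [this]
    exact hT.conj_mem _ (inv_mem hx) x⁻¹

/-- Reducing a commutator bound for `H.sq` to squares of elements of `H`. -/
lemma sq_commutator_le {H C T : Subgroup G} [T.Normal]
    (h : ∀ x ∈ H, ∀ c ∈ C, ⁅x ^ 2, c⁆ ∈ T) : ⁅H.sq, C⁆ ≤ T := by
  apply closure_commutator_le
  rintro _ ⟨x, hx, rfl⟩ c hc
  exact h x hx c hc

lemma commutator_sup_left_le {A B C : Subgroup G} [A.Normal] [B.Normal] [C.Normal] :
    ⁅A ⊔ B, C⁆ ≤ ⁅A, C⁆ ⊔ ⁅B, C⁆ := by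
  rw [Subgroup.sup_eq_closure]
  apply closure_commutator_le
  rintro s (hs | hs) c hc
  · exact Subgroup.mem_sup_left (Subgroup.commutator_mem_commutator hs hc)
  · exact Subgroup.mem_sup_right (Subgroup.commutator_mem_commutator hs hc)

lemma commutator_top_le_self {T : Subgroup G} [hT : T.Normal] :
    ⁅T, (⊤ : Subgroup G)⁆ ≤ T :=
  Subgroup.commutator_le_left T ⊤

/-- The key descent lemma: in a nilpotent group, if `X ≤ ⁅X, ⊤⁆ ⊔ T` with `T`
normal, then `X ≤ T`. -/
lemma descent [Finite G] (hG : IsPGroup 2 G) {X T : Subgroup G} [X.Normal] [hT : T.Normal]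
    (h : X ≤ ⁅X, (⊤ : Subgroup G)⁆ ⊔ T) : X ≤ T := by
  haveI : Fact (Nat.Prime 2) := ⟨Nat.prime_two⟩
  haveI : Group.IsNilpotent G := hG.isNilpotent
  obtain ⟨n, hn⟩ := _root_.nilpotent_iff_lowerCentralSeries.mp this
  have main : ∀ k, X ≤ (⊤ : Subgroup G).lowerCentralSeries k ⊔ T := by
    intro k
    induction k with
    | zero => simp [Subgroup.lowerCentralSeries]
    | succ k ih =>
      have step1 : X ≤ ⁅(⊤ : Subgroup G).lowerCentralSeries k ⊔ T, (⊤ : Subgroup G)⁆ ⊔ T :=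
        h.trans (sup_le ((Subgroup.commutator_mono ih le_rfl).trans le_sup_left) le_sup_right)
      have step2 : ⁅(⊤ : Subgroup G).lowerCentralSeries k ⊔ T, (⊤ : Subgroup G)⁆ ≤
          (⊤ : Subgroup G).lowerCentralSeries (k + 1) ⊔ T := by
        refine commutator_sup_left_le.trans (sup_le ?_ ?_)
        · exact le_sup_left
        · exact commutator_top_le_self.trans le_sup_right
      exact step1.trans (sup_le step2 le_sup_right)
  have := main n
  rw [hn] at this
  simpa using this

lemma key_identity (x g : G) : ⁅x ^ 2, g⁆ = ⁅x, ⁅x, g⁆⁆ * ⁅x, g⁆ ^ 2 := by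
  simp only [commutatorElement_def, pow_two]; group

lemma comm_swap_mem {a b : G} {T : Subgroup G} (h : ⁅a, b⁆ ∈ T) : ⁅b, a⁆ ∈ T := by
  rw [← commutatorElement_inv]; exact inv_mem h

end APEAux

open Subgroup APEAux
open scoped commutatorElement

/-- If the normal subgroup `N` of the finite `2`-group `G` is almost powerfully embedded
in `G`, then so are `N²` and `[N,G]`. -/
theorem stmt10 {G : Type*} [Group G] [Finite G] (hG : IsPGroup 2 G)
    (N : Subgroup G) [N.Normal] (hN : APE N) :
    APE N.sq ∧ APE ⁅N, (⊤ : Subgroup G)⁆ := by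
  obtain ⟨h1, h2⟩ := hN
  set P : Subgroup G := N.sq with hP
  set K : Subgroup G := ⁅N, (⊤ : Subgroup G)⁆ with hK
  set D : Subgroup G := ⁅N, N⁆ with hD
  haveI : P.Normal := sq_normal N
  haveI : P.sq.Normal := sq_normal P
  haveI : P.sq.sq.Normal := sq_normal P.sq
  haveI : K.Normal := Subgroup.commutator_normal N ⊤
  haveI : K.sq.Normal := sq_normal K
  haveI : K.sq.sq.Normal := sq_normal K.sq
  haveI : D.Normal := Subgroup.commutator_normal N N
  have hDK : D ≤ K := Subgroup.commutator_mono le_rfl le_top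
  have hPN : P ≤ N := sq_le_self N
  have hKN : K ≤ N := Subgroup.commutator_le_left N ⊤
  -- ⁅P, N⁆ ≤ P.sq
  have hPNsq : ⁅P, N⁆ ≤ P.sq := by
    apply sq_commutator_le
    intro z hz y hy
    rw [key_identity]
    have hd : ⁅z, y⁆ ∈ P.sq := h2 (Subgroup.commutator_mem_commutator hz hy)
    refine mul_mem ?_ (pow_mem hd 2)
    -- ⁅z, d⁆ ∈ P.sq since P.sq is normal
    have hconj : z * ⁅z, y⁆ * z⁻¹ ∈ P.sq := Subgroup.Normal.conj_mem ‹P.sq.Normal› _ hd z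
    have : ⁅z, ⁅z, y⁆⁆ = (z * ⁅z, y⁆ * z⁻¹) * ⁅z, y⁆⁻¹ := by
      simp only [commutatorElement_def]
    rw [this]
    exact mul_mem hconj (inv_mem hd)
  -- A1 : ⁅P, ⊤⁆ ≤ P.sq
  have hA1 : ⁅P, (⊤ : Subgroup G)⁆ ≤ P.sq := by
    apply sq_commutator_le
    intro x hx g _
    rw [key_identity]
    have ht : ⁅x, g⁆ ∈ K := Subgroup.commutator_mem_commutator hx (Subgroup.mem_top g)
    have htP : ⁅x, g⁆ ∈ P := h1 ht
    refine mul_mem ?_ (mem_sq htP)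
    exact comm_swap_mem (hPNsq (Subgroup.commutator_mem_commutator htP hx))
  -- A2 : ⁅P, P⁆ ≤ P.sq.sq
  have hY1 : ⁅P, N⁆ ≤ ⁅P.sq, N⁆ ⊔ P.sq.sq := by
    apply sq_commutator_le
    intro z hz y hy
    rw [key_identity]
    have hd : ⁅z, y⁆ ∈ P.sq := h2 (Subgroup.commutator_mem_commutator hz hy)
    refine mul_mem ?_ (Subgroup.mem_sup_right (mem_sq hd))
    exact Subgroup.mem_sup_left
      (comm_swap_mem (Subgroup.commutator_mem_commutator hd hz))
  have hY2 : ⁅P.sq, N⁆ ≤ ⁅⁅P, N⁆, (⊤ : Subgroup G)⁆ ⊔ P.sq.sq := by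
    apply sq_commutator_le
    intro m hm y hy
    rw [key_identity]
    have hu1 : ⁅m, y⁆ ∈ ⁅P, N⁆ := Subgroup.commutator_mem_commutator hm hy
    have hu2 : ⁅m, y⁆ ∈ P.sq := hA1 (Subgroup.commutator_mem_commutator hm (Subgroup.mem_top y))
    refine mul_mem ?_ (Subgroup.mem_sup_right (mem_sq hu2))
    exact Subgroup.mem_sup_left
      (comm_swap_mem (Subgroup.commutator_mem_commutator hu1 (Subgroup.mem_top m)))
  have hYfin : ⁅P, N⁆ ≤ P.sq.sq := by
    refine descent hG (X := ⁅P, N⁆) (T := P.sq.sq) ?_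
    exact hY1.trans (sup_le (hY2.trans (sup_le le_sup_left le_sup_right)) le_sup_right)
  have hA2 : ⁅P, P⁆ ≤ P.sq.sq := (Subgroup.commutator_mono le_rfl hPN).trans hYfin
  -- B1 : ⁅K, ⊤⁆ ≤ K.sq
  have hs1a : ⁅P, N⁆ ≤ ⁅D, N⁆ ⊔ K.sq := by
    apply sq_commutator_le
    intro z hz y hy
    rw [key_identity]
    have hd : ⁅z, y⁆ ∈ D := Subgroup.commutator_mem_commutator hz hy
    refine mul_mem ?_ (Subgroup.mem_sup_right (mem_sq (hDK hd)))
    exact Subgroup.mem_sup_left (comm_swap_mem (Subgroup.commutator_mem_commutator hd hz))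
  have hs1 : ⁅P, (⊤ : Subgroup G)⁆ ≤ ⁅D, N⁆ ⊔ K.sq := by
    apply sq_commutator_le
    intro x hx g _
    rw [key_identity]
    have ht : ⁅x, g⁆ ∈ K := Subgroup.commutator_mem_commutator hx (Subgroup.mem_top g)
    have htP : ⁅x, g⁆ ∈ P := h1 ht
    refine mul_mem ?_ (Subgroup.mem_sup_right (mem_sq ht))
    exact hs1a (comm_swap_mem (Subgroup.commutator_mem_commutator htP hx) :
      ⁅x, ⁅x, g⁆⁆ ∈ ⁅P, N⁆)
  have hs4 : ⁅P.sq, N⁆ ≤ ⁅⁅P, N⁆, P⁆ ⊔ K.sq := by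
    apply sq_commutator_le
    intro m hm y hy
    rw [key_identity]
    have hu : ⁅m, y⁆ ∈ D := Subgroup.commutator_mem_commutator (hPN hm) hy
    have hu1 : ⁅m, y⁆ ∈ ⁅P, N⁆ := Subgroup.commutator_mem_commutator hm hy
    refine mul_mem ?_ (Subgroup.mem_sup_right (mem_sq (hDK hu)))
    exact Subgroup.mem_sup_left (comm_swap_mem (Subgroup.commutator_mem_commutator hu1 hm))
  have hs5 : ⁅⁅P, N⁆, P⁆ ≤ ⁅⁅K, (⊤ : Subgroup G)⁆, (⊤ : Subgroup G)⁆ ⊔ K.sq := by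
    have step : ⁅⁅P, N⁆, P⁆ ≤ ⁅⁅D, N⁆ ⊔ K.sq, (⊤ : Subgroup G)⁆ :=
      Subgroup.commutator_mono hs1a le_top
    refine step.trans (commutator_sup_left_le.trans (sup_le ?_ ?_))
    · refine (Subgroup.commutator_mono ?_ le_rfl).trans le_sup_left
      exact Subgroup.commutator_mono hDK le_top
    · exact commutator_top_le_self.trans le_sup_right
  have hB1 : ⁅K, (⊤ : Subgroup G)⁆ ≤ K.sq := by
    refine descent hG (X := ⁅K, (⊤ : Subgroup G)⁆) (T := K.sq) ?_
    calc ⁅K, (⊤ : Subgroup G)⁆ ≤ ⁅P, (⊤ : Subgroup G)⁆ := Subgroup.commutator_mono h1 le_rfl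
      _ ≤ ⁅D, N⁆ ⊔ K.sq := hs1
      _ ≤ ⁅P.sq, N⁆ ⊔ K.sq := by
          refine sup_le ?_ le_sup_right
          exact (Subgroup.commutator_mono h2 le_rfl).trans le_sup_left
      _ ≤ (⁅⁅P, N⁆, P⁆ ⊔ K.sq) ⊔ K.sq := sup_le (hs4.trans le_sup_left) le_sup_right
      _ ≤ ⁅⁅K, (⊤ : Subgroup G)⁆, (⊤ : Subgroup G)⁆ ⊔ K.sq := by
          refine sup_le (sup_le ?_ le_sup_right) le_sup_right
          exact hs5
  -- B2 : ⁅K, K⁆ ≤ K.sq.sq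
  have hc1 : ⁅P, K⁆ ≤ ⁅K.sq, N⁆ ⊔ K.sq.sq := by
    apply sq_commutator_le
    intro z hz k' hk'
    rw [key_identity]
    have hv : ⁅z, k'⁆ ∈ K.sq := by
      apply comm_swap_mem
      exact hB1 (Subgroup.commutator_mem_commutator hk' (Subgroup.mem_top z))
    refine mul_mem ?_ (Subgroup.mem_sup_right (mem_sq hv))
    exact Subgroup.mem_sup_left (comm_swap_mem (Subgroup.commutator_mem_commutator hv hz))
  have hc2 : ⁅K.sq, N⁆ ≤ ⁅K.sq, K⁆ ⊔ K.sq.sq := by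
    apply sq_commutator_le
    intro k hk y hy
    rw [key_identity]
    have hu : ⁅k, y⁆ ∈ K.sq := hB1 (Subgroup.commutator_mem_commutator hk (Subgroup.mem_top y))
    refine mul_mem ?_ (Subgroup.mem_sup_right (mem_sq hu))
    exact Subgroup.mem_sup_left (comm_swap_mem (Subgroup.commutator_mem_commutator hu hk))
  have hc3 : ⁅K.sq, K⁆ ≤ ⁅⁅K, K⁆, (⊤ : Subgroup G)⁆ ⊔ K.sq.sq := by
    apply sq_commutator_le
    intro k hk k'' hk''
    rw [key_identity]
    have hvKK : ⁅k, k''⁆ ∈ ⁅K, K⁆ := Subgroup.commutator_mem_commutator hk hk''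
    have hvsq : ⁅k, k''⁆ ∈ K.sq :=
      hB1 (Subgroup.commutator_mem_commutator hk (Subgroup.mem_top k''))
    refine mul_mem ?_ (Subgroup.mem_sup_right (mem_sq hvsq))
    exact Subgroup.mem_sup_left
      (comm_swap_mem (Subgroup.commutator_mem_commutator hvKK (Subgroup.mem_top k)))
  have hB2 : ⁅K, K⁆ ≤ K.sq.sq := by
    refine descent hG (X := ⁅K, K⁆) (T := K.sq.sq) ?_
    calc ⁅K, K⁆ ≤ ⁅P, K⁆ := Subgroup.commutator_mono h1 le_rfl
      _ ≤ ⁅K.sq, N⁆ ⊔ K.sq.sq := hc1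
      _ ≤ (⁅K.sq, K⁆ ⊔ K.sq.sq) ⊔ K.sq.sq := sup_le (hc2.trans le_sup_left) le_sup_right
      _ ≤ ⁅⁅K, K⁆, (⊤ : Subgroup G)⁆ ⊔ K.sq.sq := by
          refine sup_le (sup_le ?_ le_sup_right) le_sup_right
          exact hc3
  exact ⟨⟨hA1, hA2⟩, ⟨hB1, hB2⟩⟩
end

section
/- Let G be a finite 2-group and let N, M ≤ G^2 be subgroups that are both almost powerfully embedded in G. Then NM and [N,M] are almost powerfully embedded in G. -/
namespace APEaux

open Subgroup
open scoped commutatorElement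

variable {G : Type*} [Group G]

theorem sq_le (H : Subgroup G) : H.sq ≤ H :=
  (closure_le _).mpr (by rintro _ ⟨x, hx, rfl⟩; exact H.pow_mem hx 2)

theorem sq_mono {H K : Subgroup G} (h : H ≤ K) : H.sq ≤ K.sq :=
  closure_mono (Set.image_mono h)

theorem sq_mem_sq {H : Subgroup G} {x : G} (hx : x ∈ H) : x ^ 2 ∈ H.sq :=
  subset_closure ⟨x, hx, rfl⟩

theorem map_sq {G' : Type*} [Group G'] (f : G →* G') (H : Subgroup G) :
    H.sq.map f = (H.map f).sq := by
  rw [Subgroup.sq, Subgroup.sq, MonoidHom.map_closure]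
  congr 1
  rw [coe_map, Set.image_image, Set.image_image]
  exact Set.image_congr fun x _ => by simp [map_pow]

theorem normal_of_comm_le {H : Subgroup G} (h : ⁅H, (⊤ : Subgroup G)⁆ ≤ H) : H.Normal := by
  constructor
  intro n hn g
  have h1 : ⁅g, n⁆ ∈ H := h ((commutator_comm_le _ _) (commutator_mem_commutator (mem_top g) hn))
  have : g * n * g⁻¹ = ⁅g, n⁆ * n := by group
  rw [this]; exact H.mul_mem h1 hn

theorem map_conj_self {H : Subgroup G} (hH : H.Normal) (g : G) :
    H.map (MulAut.conj g).toMonoidHom = H := by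
  ext x
  constructor
  · rintro ⟨y, hy, rfl⟩; exact hH.conj_mem y hy g
  · intro hx
    exact ⟨g⁻¹ * x * g, by simpa using hH.conj_mem x hx g⁻¹, by simp [MulAut.conj]; group⟩

theorem Normal.sq' {H : Subgroup G} (hH : H.Normal) : H.sq.Normal := by
  constructor
  intro x hx g
  have : H.sq.map (MulAut.conj g).toMonoidHom = H.sq := by
    rw [map_sq, map_conj_self hH]
  rw [← this]
  exact ⟨x, hx, rfl⟩

/-- For `S` normal and fixed `y`, the set of `x` with `⁅x,y⁆ ∈ S` is a subgroup. -/
def commL (S : Subgroup G) (hS : S.Normal) (y : G) : Subgroup G where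
  carrier := {x | ⁅x, y⁆ ∈ S}
  one_mem' := by simp only [Set.mem_setOf_eq, commutatorElement_one_left]; exact S.one_mem
  mul_mem' := by
    intro a b ha hb
    have : ⁅a * b, y⁆ = (a * ⁅b, y⁆ * a⁻¹) * ⁅a, y⁆ := by group
    simp only [Set.mem_setOf_eq] at *
    rw [this]
    exact S.mul_mem (hS.conj_mem _ hb a) ha
  inv_mem' := by
    intro a ha
    have : ⁅a⁻¹, y⁆ = a⁻¹ * ⁅a, y⁆⁻¹ * (a⁻¹)⁻¹ := by group
    simp only [Set.mem_setOf_eq] at *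
    rw [this]
    exact hS.conj_mem _ (S.inv_mem ha) a⁻¹

/-- For `S` normal and fixed `x`, the set of `y` with `⁅x,y⁆ ∈ S` is a subgroup. -/
def commR (S : Subgroup G) (hS : S.Normal) (x : G) : Subgroup G where
  carrier := {y | ⁅x, y⁆ ∈ S}
  one_mem' := by simp only [Set.mem_setOf_eq, commutatorElement_one_right]; exact S.one_mem
  mul_mem' := by
    intro a b ha hb
    have : ⁅x, a * b⁆ = ⁅x, a⁆ * (a * ⁅x, b⁆ * a⁻¹) := by group
    simp only [Set.mem_setOf_eq] at *
    rw [this]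
    exact S.mul_mem ha (hS.conj_mem _ hb a)
  inv_mem' := by
    intro a ha
    have : ⁅x, a⁻¹⁆ = a⁻¹ * ⁅x, a⁆⁻¹ * (a⁻¹)⁻¹ := by group
    simp only [Set.mem_setOf_eq] at *
    rw [this]
    exact hS.conj_mem _ (S.inv_mem ha) a⁻¹

theorem comm_sup_left_le {N M K S : Subgroup G} (hS : S.Normal) (h1 : ⁅N, K⁆ ≤ S)
    (h2 : ⁅M, K⁆ ≤ S) : ⁅N ⊔ M, K⁆ ≤ S := by
  rw [commutator_le]
  intro x hx y hy
  have : N ⊔ M ≤ commL S hS y := by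
    refine sup_le (fun n hn => ?_) (fun m hm => ?_)
    · exact h1 (commutator_mem_commutator hn hy)
    · exact h2 (commutator_mem_commutator hm hy)
  exact this hx

theorem comm_sup_right_le {N M K S : Subgroup G} (hS : S.Normal) (h1 : ⁅K, N⁆ ≤ S)
    (h2 : ⁅K, M⁆ ≤ S) : ⁅K, N ⊔ M⁆ ≤ S := by
  rw [commutator_le]
  intro x hx y hy
  have : N ⊔ M ≤ commR S hS x := by
    refine sup_le (fun n hn => ?_) (fun m hm => ?_)
    · exact h1 (commutator_mem_commutator hx hn)
    · exact h2 (commutator_mem_commutator hx hm)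
  exact this hy

theorem comm_sq_left_le {N K S : Subgroup G} (hS : S.Normal)
    (h : ∀ x ∈ N, ∀ y ∈ K, ⁅x ^ 2, y⁆ ∈ S) : ⁅N.sq, K⁆ ≤ S := by
  rw [commutator_le]
  intro x hx y hy
  have : N.sq ≤ commL S hS y := by
    rw [Subgroup.sq, closure_le]
    rintro _ ⟨z, hz, rfl⟩
    exact h z hz y hy
  exact this hx

theorem comm_sq_right_le {N K S : Subgroup G} (hS : S.Normal)
    (h : ∀ x ∈ K, ∀ y ∈ N, ⁅x, y ^ 2⁆ ∈ S) : ⁅K, N.sq⁆ ≤ S := by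
  rw [commutator_le]
  intro x hx y hy
  have : N.sq ≤ commR S hS x := by
    rw [Subgroup.sq, closure_le]
    rintro _ ⟨z, hz, rfl⟩
    exact h x hx z hz
  exact this hy

theorem comm_sq_left (x y : G) : ⁅x ^ 2, y⁆ = ⁅x, ⁅x, y⁆⁆ * ⁅x, y⁆ ^ 2 := by
  simp only [commutatorElement_def, pow_two]; group

theorem comm_sq_right (x y : G) : ⁅x, y ^ 2⁆ = ⁅x, y⁆ ^ 2 * ⁅⁅x, y⁆⁻¹, y⁆ := by
  simp only [commutatorElement_def, pow_two]; group

/-- A nontrivial normal subgroup of a finite `p`-group contains a nontrivial central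
element. -/
theorem exists_central {p : ℕ} [Fact p.Prime] [Finite G] (hG : IsPGroup p G)
    (K : Subgroup G) [K.Normal] (hK : K ≠ ⊥) :
    ∃ z : G, z ∈ K ∧ z ∈ Subgroup.center G ∧ z ≠ 1 := by
  classical
  have hG' : IsPGroup p (ConjAct G) := hG.of_equiv ConjAct.toConjAct
  have h1 : (1 : K) ∈ MulAction.fixedPoints (ConjAct G) K := by
    intro g
    exact Subtype.ext (by simp [ConjAct.Subgroup.val_conj_smul])
  have hdvd : p ∣ Nat.card K := by
    have hK' : IsPGroup p K := hG.to_subgroup K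
    obtain ⟨n, hn0, hn⟩ := hK'.nontrivial_iff_card.mp
      ((Subgroup.nontrivial_iff_ne_bot K).mpr hK)
    exact hn ▸ dvd_pow_self _ hn0.ne'
  obtain ⟨b, hb, hb1⟩ := hG'.exists_fixed_point_of_prime_dvd_card_of_fixed_point K hdvd h1
  refine ⟨(b : G), b.2, ?_, ?_⟩
  · rw [Subgroup.mem_center_iff]
    intro g
    have := hb (ConjAct.toConjAct g)
    have hval : g * (b : G) * g⁻¹ = (b : G) := by
      have := congrArg (Subtype.val) this
      rwa [ConjAct.Subgroup.val_conj_smul, ConjAct.toConjAct_smul] at this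
    calc g * (b : G) = (g * b * g⁻¹) * g := by group
    _ = (b : G) * g := by rw [hval]
  · intro h
    exact hb1 (Subtype.ext (by simp [h])).symm

/-- A central subgroup of a finite `2`-group equal to its own subgroup of squares is
trivial. -/
theorem eq_bot_of_sq_self [Finite G] (hG : IsPGroup 2 G) (H : Subgroup G)
    (hc : H ≤ Subgroup.center G) (h : H.sq = H) : H = ⊥ := by
  classical
  by_contra hne
  haveI : Nontrivial H := (Subgroup.nontrivial_iff_ne_bot H).mpr hne
  have hsub : ∀ x ∈ H, ∃ y ∈ H, y ^ 2 = x := by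
    intro x hx
    let Sqs : Subgroup G :=
      { carrier := {g | ∃ y ∈ H, y ^ 2 = g}
        one_mem' := ⟨1, H.one_mem, one_pow 2⟩
        mul_mem' := by
          rintro a b ⟨y, hy, rfl⟩ ⟨z, hz, rfl⟩
          refine ⟨y * z, H.mul_mem hy hz, ?_⟩
          have hcomm : z * y = y * z := Subgroup.mem_center_iff.mp (hc hy) z
          rw [pow_two, pow_two, pow_two]
          calc y * z * (y * z) = y * (z * y) * z := by group
          _ = y * y * (z * z) := by rw [hcomm]; group
        inv_mem' := by
          rintro a ⟨y, hy, rfl⟩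
          exact ⟨y⁻¹, H.inv_mem hy, by group⟩ }
    have : H.sq ≤ Sqs := by
      rw [Subgroup.sq, closure_le]
      rintro _ ⟨z, hz, rfl⟩
      exact ⟨z, hz, rfl⟩
    exact this (by rw [h]; exact hx)
  let f : H → H := fun y => ⟨(y : G) ^ 2, H.pow_mem y.2 2⟩
  have hfsurj : Function.Surjective f := by
    rintro ⟨x, hx⟩
    obtain ⟨y, hy, hyx⟩ := hsub x hx
    exact ⟨⟨y, hy⟩, Subtype.ext hyx⟩
  have hfinj : Function.Injective f := Finite.injective_iff_surjective.mpr hfsurj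
  have hdvd : 2 ∣ Nat.card H := by
    have hH' : IsPGroup 2 H := hG.to_subgroup H
    obtain ⟨n, hn0, hn⟩ := hH'.nontrivial_iff_card.mp inferInstance
    exact hn ▸ dvd_pow_self _ hn0.ne'
  obtain ⟨z, hz⟩ := exists_prime_orderOf_dvd_card' (G := H) 2 hdvd
  have hz2 : f z = f 1 := by
    refine Subtype.ext ?_
    have : z ^ 2 = 1 := by rw [← hz]; exact pow_orderOf_eq_one z
    have := congrArg (Subtype.val) this
    simpa [f] using this
  have : z = 1 := hfinj hz2
  rw [this, orderOf_one] at hz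
  norm_num at hz

section Quot

variable (S : Subgroup G) [S.Normal]

theorem le_of_map_le {A B : Subgroup G} (hS : S ≤ B)
    (h : A.map (QuotientGroup.mk' S) ≤ B.map (QuotientGroup.mk' S)) : A ≤ B := by
  calc A ≤ comap (QuotientGroup.mk' S) (map (QuotientGroup.mk' S) A) := le_comap_map _ _
  _ ≤ comap (QuotientGroup.mk' S) (map (QuotientGroup.mk' S) B) := comap_mono h
  _ = B ⊔ S := by rw [comap_map_eq, QuotientGroup.ker_mk']
  _ = B := sup_eq_left.mpr hS

theorem map_le_bot {A : Subgroup G} (h : A.map (QuotientGroup.mk' S) ≤ ⊥) : A ≤ S := by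
  have := le_of_map_le S (le_refl S) (A := A) (B := S) ?_
  · exact this
  · refine h.trans ?_
    simp

omit [S.Normal] in
theorem card_quot_lt [Finite G] (hS : S ≠ ⊥) : Nat.card (G ⧸ S) < Nat.card G := by
  have h := Subgroup.card_eq_card_quotient_mul_card_subgroup S
  have h2 : 1 < Nat.card S := (Subgroup.one_lt_card_iff_ne_bot S).mpr hS
  have h3 : 0 < Nat.card (G ⧸ S) := Nat.card_pos
  calc Nat.card (G ⧸ S) = Nat.card (G ⧸ S) * 1 := (mul_one _).symm
  _ < Nat.card (G ⧸ S) * Nat.card S := by exact Nat.mul_lt_mul_of_le_of_lt (le_refl _) h2 h3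
  _ = Nat.card G := h.symm

theorem map_top_eq : (⊤ : Subgroup G).map (QuotientGroup.mk' S) = ⊤ :=
  Subgroup.map_top_of_surjective _ (QuotientGroup.mk'_surjective S)

end Quot

/-- `N²` is powerfully embedded when `N` is almost powerfully embedded. -/
theorem lemC {N : Subgroup G} (hNn : N.Normal) (h1 : ⁅N, (⊤ : Subgroup G)⁆ ≤ N.sq)
    (h2 : ⁅N, N⁆ ≤ N.sq.sq) : ⁅N.sq, (⊤ : Subgroup G)⁆ ≤ N.sq.sq := by
  have hS : N.sq.sq.Normal := Normal.sq' (Normal.sq' hNn)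
  refine comm_sq_left_le hS fun x hx y _ => ?_
  rw [comm_sq_left]
  have hc : ⁅x, y⁆ ∈ N.sq := h1 (commutator_mem_commutator hx (Subgroup.mem_top y))
  exact mul_mem (h2 (commutator_mem_commutator hx (sq_le N hc))) (sq_mem_sq hc)

/-- `⁅N, G²⁆ ≤ (N²)²` when `N` is almost powerfully embedded. -/
theorem lemB {N : Subgroup G} (hNn : N.Normal) (h1 : ⁅N, (⊤ : Subgroup G)⁆ ≤ N.sq)
    (h2 : ⁅N, N⁆ ≤ N.sq.sq) : ⁅N, (⊤ : Subgroup G).sq⁆ ≤ N.sq.sq := by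
  have hS : N.sq.sq.Normal := Normal.sq' (Normal.sq' hNn)
  refine comm_sq_right_le hS fun x hx g _ => ?_
  rw [comm_sq_right]
  have hc : ⁅x, g⁆ ∈ N.sq := h1 (commutator_mem_commutator hx (Subgroup.mem_top g))
  refine mul_mem (sq_mem_sq hc) ?_
  exact lemC hNn h1 h2 (commutator_mem_commutator (N.sq.inv_mem hc) (Subgroup.mem_top g))

end APEaux

open Subgroup APEaux
open scoped commutatorElement

/-- Key inductive lemma: a powerfully embedded subgroup of `G²` satisfies
`⁅X,X⁆ ≤ (X²)²`. -/
theorem lemE : ∀ (n : ℕ) (G : Type*) [Group G] [Finite G], Nat.card G ≤ n →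
    IsPGroup 2 G → ∀ X : Subgroup G, X ≤ (⊤ : Subgroup G).sq →
    ⁅X, (⊤ : Subgroup G)⁆ ≤ X.sq → ⁅X, X⁆ ≤ X.sq.sq := by
  intro n
  induction n with
  | zero =>
    intro G _ _ hcard
    have : 0 < Nat.card G := Nat.card_pos
    omega
  | succ n ih =>
    intro G _ _ hcard hG X hXle h1
    have hXn : X.Normal := normal_of_comm_le (h1.trans (sq_le X))
    haveI := hXn
    have hsqn : X.sq.Normal := Normal.sq' hXn
    haveI := hsqn
    have hS : X.sq.sq.Normal := Normal.sq' hsqn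
    haveI := hS
    by_cases hSbot : X.sq.sq = ⊥
    case neg =>
      have hcard' : Nat.card (G ⧸ X.sq.sq) ≤ n := by
        have := card_quot_lt (X.sq.sq) hSbot
        omega
      have key := ih (G ⧸ X.sq.sq) hcard' (hG.to_quotient _)
        (X.map (QuotientGroup.mk' X.sq.sq))
        (by rw [← map_top_eq X.sq.sq, ← map_sq]; exact map_mono hXle)
        (by rw [← map_top_eq X.sq.sq, ← map_sq, ← map_commutator]; exact map_mono h1)
      refine le_of_map_le X.sq.sq (le_refl _) ?_
      simp only [map_commutator, map_sq]
      exact key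
    case pos =>
      haveI : Fact (Nat.Prime 2) := ⟨Nat.prime_two⟩
      haveI : (⁅X, X⁆ : Subgroup G).Normal := Subgroup.commutator_normal X X
      by_cases hKbot : (⁅X, X⁆ : Subgroup G) = ⊥
      · exact hKbot.le.trans bot_le
      by_cases hW : ∃ W : Subgroup G, W.Normal ∧ W ≤ ⁅X, X⁆ ∧ W ≠ ⊥ ∧ W ≠ ⁅X, X⁆
      · obtain ⟨W, hWn, hWK, hWbot, hWne⟩ := hW
        haveI := hWn
        have hcard' : Nat.card (G ⧸ W) ≤ n := by
          have := card_quot_lt W hWbot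
          omega
        have key := ih (G ⧸ W) hcard' (hG.to_quotient _) (X.map (QuotientGroup.mk' W))
          (by rw [← map_top_eq W, ← map_sq]; exact map_mono hXle)
          (by rw [← map_top_eq W, ← map_sq, ← map_commutator]; exact map_mono h1)
        have hmapbot : (⁅X, X⁆ : Subgroup G).map (QuotientGroup.mk' W) ≤ ⊥ := by
          simp only [map_commutator]
          refine key.trans ?_
          rw [← map_sq, ← map_sq, hSbot]
          simp
        have hKW : (⁅X, X⁆ : Subgroup G) ≤ W := map_le_bot W hmapbot
        exact absurd (le_antisymm hWK hKW) hWne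
      · push_neg at hW
        obtain ⟨z, hzK, hzC, hz1⟩ := exists_central hG ⁅X, X⁆ hKbot
        have hKc : (⁅X, X⁆ : Subgroup G) ≤ Subgroup.center G := by
          haveI : ((⁅X, X⁆ : Subgroup G) ⊓ Subgroup.center G).Normal := inferInstance
          have hne : (⁅X, X⁆ : Subgroup G) ⊓ Subgroup.center G ≠ ⊥ := by
            intro habs
            exact hz1 (Subgroup.mem_bot.mp (habs ▸ ⟨hzK, hzC⟩))
          exact inf_eq_left.mp (hW _ this inf_le_left hne)
        have hKsq : (⁅X, X⁆ : Subgroup G).sq = ⊥ := by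
          by_contra habs
          have heq : (⁅X, X⁆ : Subgroup G).sq = ⁅X, X⁆ :=
            hW _ (Normal.sq' ‹(⁅X, X⁆ : Subgroup G).Normal›) (sq_le _) habs
          exact hKbot (eq_bot_of_sq_self hG _ hKc heq)
        have hKcomm : ∀ k g : G, k ∈ (⁅X, X⁆ : Subgroup G) → ⁅k, g⁆ = 1 := fun k g hk =>
          commutatorElement_eq_one_iff_mul_comm.mpr
            ((Subgroup.mem_center_iff.mp (hKc hk) g).symm)
        -- step (i): ⁅X, X²⁆ = ⊥
        have step1 : ⁅X, X.sq⁆ ≤ (⊥ : Subgroup G) := by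
          refine comm_sq_right_le (inferInstance : (⊥ : Subgroup G).Normal)
            fun x hx y hy => ?_
          rw [comm_sq_right, Subgroup.mem_bot]
          have hc : ⁅x, y⁆ ∈ (⁅X, X⁆ : Subgroup G) := commutator_mem_commutator hx hy
          have e1 : ⁅x, y⁆ ^ 2 = 1 := Subgroup.mem_bot.mp (hKsq ▸ sq_mem_sq hc)
          have e2 : ⁅⁅x, y⁆⁻¹, y⁆ = 1 := hKcomm _ y ((⁅X, X⁆ : Subgroup G).inv_mem hc)
          rw [e1, e2, one_mul]
        -- step (ii): ⁅X², ⊤⁆ = ⊥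
        have step2 : ⁅X.sq, (⊤ : Subgroup G)⁆ ≤ (⊥ : Subgroup G) := by
          refine comm_sq_left_le (inferInstance : (⊥ : Subgroup G).Normal)
            fun x hx y _ => ?_
          rw [comm_sq_left, Subgroup.mem_bot]
          have hd : ⁅x, y⁆ ∈ X.sq := h1 (commutator_mem_commutator hx (Subgroup.mem_top y))
          have e1 : ⁅x, ⁅x, y⁆⁆ = 1 :=
            Subgroup.mem_bot.mp (step1 (commutator_mem_commutator hx hd))
          have e2 : ⁅x, y⁆ ^ 2 = 1 := Subgroup.mem_bot.mp (hSbot ▸ sq_mem_sq hd)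
          rw [e1, e2, one_mul]
        -- step (iii): ⁅X, G²⁆ = ⊥
        have step3 : ⁅X, (⊤ : Subgroup G).sq⁆ ≤ (⊥ : Subgroup G) := by
          refine comm_sq_right_le (inferInstance : (⊥ : Subgroup G).Normal)
            fun x hx g _ => ?_
          rw [comm_sq_right, Subgroup.mem_bot]
          have hc : ⁅x, g⁆ ∈ X.sq := h1 (commutator_mem_commutator hx (Subgroup.mem_top g))
          have e1 : ⁅x, g⁆ ^ 2 = 1 := Subgroup.mem_bot.mp (hSbot ▸ sq_mem_sq hc)
          have e2 : ⁅⁅x, g⁆⁻¹, g⁆ = 1 := Subgroup.mem_bot.mp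
            (step2 (commutator_mem_commutator (X.sq.inv_mem hc) (Subgroup.mem_top g)))
          rw [e1, e2, one_mul]
        have : ⁅X, X⁆ ≤ (⊥ : Subgroup G) :=
          (Subgroup.commutator_mono (le_refl X) hXle).trans step3
        exact this.trans bot_le

/-- Key inductive lemma: `⁅N,M⁆` is powerfully embedded. -/
theorem lemF : ∀ (n : ℕ) (G : Type*) [Group G] [Finite G], Nat.card G ≤ n →
    IsPGroup 2 G → ∀ N M : Subgroup G, N ≤ (⊤ : Subgroup G).sq → M ≤ (⊤ : Subgroup G).sq →
    ⁅N, (⊤ : Subgroup G)⁆ ≤ N.sq → ⁅M, (⊤ : Subgroup G)⁆ ≤ M.sq →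
    ⁅⁅N, M⁆, (⊤ : Subgroup G)⁆ ≤ ⁅N, M⁆.sq := by
  intro n
  induction n with
  | zero =>
    intro G _ _ hcard
    have : 0 < Nat.card G := Nat.card_pos
    omega
  | succ n ih =>
    intro G _ _ hcard hG N M hN2 hM2 hN1 hM1
    have hNn : N.Normal := normal_of_comm_le (hN1.trans (sq_le N))
    have hMn : M.Normal := normal_of_comm_le (hM1.trans (sq_le M))
    haveI := hNn; haveI := hMn
    haveI hLn : (⁅N, M⁆ : Subgroup G).Normal := Subgroup.commutator_normal N M
    have hLsqn : (⁅N, M⁆ : Subgroup G).sq.Normal := Normal.sq' hLn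
    haveI := hLsqn
    by_cases hSbot : (⁅N, M⁆ : Subgroup G).sq = ⊥
    case neg =>
      have hcard' : Nat.card (G ⧸ (⁅N, M⁆ : Subgroup G).sq) ≤ n := by
        have := card_quot_lt (⁅N, M⁆ : Subgroup G).sq hSbot
        omega
      have key := ih (G ⧸ (⁅N, M⁆ : Subgroup G).sq) hcard' (hG.to_quotient _)
        (N.map (QuotientGroup.mk' (⁅N, M⁆ : Subgroup G).sq))
        (M.map (QuotientGroup.mk' (⁅N, M⁆ : Subgroup G).sq))
        (by rw [← map_top_eq (⁅N, M⁆ : Subgroup G).sq, ← map_sq]; exact map_mono hN2)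
        (by rw [← map_top_eq (⁅N, M⁆ : Subgroup G).sq, ← map_sq]; exact map_mono hM2)
        (by rw [← map_top_eq (⁅N, M⁆ : Subgroup G).sq, ← map_sq, ← map_commutator]
            exact map_mono hN1)
        (by rw [← map_top_eq (⁅N, M⁆ : Subgroup G).sq, ← map_sq, ← map_commutator]
            exact map_mono hM1)
      refine le_of_map_le (⁅N, M⁆ : Subgroup G).sq (le_refl _) ?_
      simp only [map_commutator, map_sq, map_top_eq]
      exact key
    case pos =>
      haveI : Fact (Nat.Prime 2) := ⟨Nat.prime_two⟩
      haveI : (⁅(⁅N, M⁆ : Subgroup G), (⊤ : Subgroup G)⁆).Normal :=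
        Subgroup.commutator_normal _ _
      by_cases hKbot : (⁅(⁅N, M⁆ : Subgroup G), (⊤ : Subgroup G)⁆ : Subgroup G) = ⊥
      · exact hKbot.le.trans bot_le
      by_cases hW : ∃ W : Subgroup G, W.Normal ∧ W ≤ ⁅(⁅N, M⁆ : Subgroup G), ⊤⁆ ∧
          W ≠ ⊥ ∧ W ≠ ⁅(⁅N, M⁆ : Subgroup G), ⊤⁆
      · obtain ⟨W, hWn, hWK, hWbot, hWne⟩ := hW
        haveI := hWn
        have hcard' : Nat.card (G ⧸ W) ≤ n := by
          have := card_quot_lt W hWbot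
          omega
        have key := ih (G ⧸ W) hcard' (hG.to_quotient _)
          (N.map (QuotientGroup.mk' W)) (M.map (QuotientGroup.mk' W))
          (by rw [← map_top_eq W, ← map_sq]; exact map_mono hN2)
          (by rw [← map_top_eq W, ← map_sq]; exact map_mono hM2)
          (by rw [← map_top_eq W, ← map_sq, ← map_commutator]; exact map_mono hN1)
          (by rw [← map_top_eq W, ← map_sq, ← map_commutator]; exact map_mono hM1)
        have hmapbot :
            (⁅(⁅N, M⁆ : Subgroup G), (⊤ : Subgroup G)⁆).map (QuotientGroup.mk' W) ≤ ⊥ := by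
          simp only [map_commutator, map_top_eq]
          refine key.trans ?_
          rw [← map_commutator, ← map_sq, hSbot]
          simp
        have hKW : (⁅(⁅N, M⁆ : Subgroup G), (⊤ : Subgroup G)⁆ : Subgroup G) ≤ W :=
          map_le_bot W hmapbot
        exact absurd (le_antisymm hWK hKW) hWne
      · push_neg at hW
        obtain ⟨z, hzK, hzC, hz1⟩ := exists_central hG ⁅(⁅N, M⁆ : Subgroup G), ⊤⁆ hKbot
        have hKc : (⁅(⁅N, M⁆ : Subgroup G), (⊤ : Subgroup G)⁆ : Subgroup G) ≤
            Subgroup.center G := by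
          haveI : ((⁅(⁅N, M⁆ : Subgroup G), (⊤ : Subgroup G)⁆ : Subgroup G) ⊓
              Subgroup.center G).Normal := inferInstance
          have hne : (⁅(⁅N, M⁆ : Subgroup G), (⊤ : Subgroup G)⁆ : Subgroup G) ⊓
              Subgroup.center G ≠ ⊥ := by
            intro habs
            exact hz1 (Subgroup.mem_bot.mp (habs ▸ ⟨hzK, hzC⟩))
          exact inf_eq_left.mp (hW _ this inf_le_left hne)
        have hKsq : (⁅(⁅N, M⁆ : Subgroup G), (⊤ : Subgroup G)⁆ : Subgroup G).sq = ⊥ := by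
          by_contra habs
          have heq := hW _ (Normal.sq'
            ‹(⁅(⁅N, M⁆ : Subgroup G), (⊤ : Subgroup G)⁆ : Subgroup G).Normal›)
            (sq_le _) habs
          exact hKbot (eq_bot_of_sq_self hG _ hKc heq)
        have hKcomm : ∀ k g : G,
            k ∈ (⁅(⁅N, M⁆ : Subgroup G), (⊤ : Subgroup G)⁆ : Subgroup G) → ⁅k, g⁆ = 1 :=
          fun k g hk => commutatorElement_eq_one_iff_mul_comm.mpr
            ((Subgroup.mem_center_iff.mp (hKc hk) g).symm)
        -- step (1): ⁅⁅N,M⁆, G²⁆ = ⊥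
        have step1 : ⁅(⁅N, M⁆ : Subgroup G), (⊤ : Subgroup G).sq⁆ ≤ (⊥ : Subgroup G) := by
          refine comm_sq_right_le (inferInstance : (⊥ : Subgroup G).Normal)
            fun l hl g _ => ?_
          rw [comm_sq_right, Subgroup.mem_bot]
          have hc : ⁅l, g⁆ ∈ (⁅(⁅N, M⁆ : Subgroup G), (⊤ : Subgroup G)⁆ : Subgroup G) :=
            commutator_mem_commutator hl (Subgroup.mem_top g)
          have e1 : ⁅l, g⁆ ^ 2 = 1 := Subgroup.mem_bot.mp (hKsq ▸ sq_mem_sq hc)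
          have e2 : ⁅⁅l, g⁆⁻¹, g⁆ = 1 := hKcomm _ g (Subgroup.inv_mem _ hc)
          rw [e1, e2, one_mul]
        -- step (2): ⁅N², M⁆ = ⊥
        have step2 : ⁅N.sq, M⁆ ≤ (⊥ : Subgroup G) := by
          refine comm_sq_left_le (inferInstance : (⊥ : Subgroup G).Normal)
            fun x hx m hm => ?_
          rw [comm_sq_left, Subgroup.mem_bot]
          have hd : ⁅x, m⁆ ∈ (⁅N, M⁆ : Subgroup G) := commutator_mem_commutator hx hm
          have e2 : ⁅x, m⁆ ^ 2 = 1 := Subgroup.mem_bot.mp (hSbot ▸ sq_mem_sq hd)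
          have e1 : ⁅x, ⁅x, m⁆⁆ = 1 := by
            have hmem : ⁅⁅x, m⁆, x⁆ ∈ (⊥ : Subgroup G) :=
              step1 (commutator_mem_commutator hd (hN2 hx))
            have h' : ⁅⁅x, m⁆, x⁆ = 1 := Subgroup.mem_bot.mp hmem
            have hrw : ⁅x, ⁅x, m⁆⁆ = ⁅⁅x, m⁆, x⁆⁻¹ := (commutatorElement_inv _ _).symm
            rw [hrw, h', inv_one]
          rw [e1, e2, one_mul]
        -- step (3): ⁅M², N⁆ = ⊥
        have step3 : ⁅M.sq, N⁆ ≤ (⊥ : Subgroup G) := by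
          refine comm_sq_left_le (inferInstance : (⊥ : Subgroup G).Normal)
            fun x hx m hm => ?_
          rw [comm_sq_left, Subgroup.mem_bot]
          have hd : ⁅x, m⁆ ∈ (⁅N, M⁆ : Subgroup G) := by
            have hmem : ⁅m, x⁆ ∈ (⁅N, M⁆ : Subgroup G) := commutator_mem_commutator hm hx
            have h' : ⁅x, m⁆ = ⁅m, x⁆⁻¹ := (commutatorElement_inv _ _).symm
            rw [h']; exact Subgroup.inv_mem _ hmem
          have e2 : ⁅x, m⁆ ^ 2 = 1 := Subgroup.mem_bot.mp (hSbot ▸ sq_mem_sq hd)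
          have e1 : ⁅x, ⁅x, m⁆⁆ = 1 := by
            have hmem : ⁅⁅x, m⁆, x⁆ ∈ (⊥ : Subgroup G) :=
              step1 (commutator_mem_commutator hd (hM2 hx))
            have h' : ⁅⁅x, m⁆, x⁆ = 1 := Subgroup.mem_bot.mp hmem
            have hrw : ⁅x, ⁅x, m⁆⁆ = ⁅⁅x, m⁆, x⁆⁻¹ := (commutatorElement_inv _ _).symm
            rw [hrw, h', inv_one]
          rw [e1, e2, one_mul]
        -- three subgroups lemma
        have hfinal : (⁅(⁅N, M⁆ : Subgroup G), (⊤ : Subgroup G)⁆ : Subgroup G) = ⊥ := by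
          apply Subgroup.commutator_commutator_eq_bot_of_rotate
          · refine le_bot_iff.mp ?_
            exact (Subgroup.commutator_mono hM1 (le_refl N)).trans step3
          · refine le_bot_iff.mp ?_
            exact (Subgroup.commutator_mono
              ((Subgroup.commutator_comm (⊤ : Subgroup G) N).le.trans hN1)
              (le_refl M)).trans step2
        exact hfinal.le.trans bot_le

/-- If `N, M ≤ G²` are both almost powerfully embedded in the finite `2`-group `G`,
then so are `NM` and `[N,M]`. -/
theorem stmt11 {G : Type*} [Group G] [Finite G] (hG : IsPGroup 2 G)
    (N M : Subgroup G) (hN2 : N ≤ Subgroup.sq ⊤) (hM2 : M ≤ Subgroup.sq ⊤)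
    (hN : APE N) (hM : APE M) :
    APE (N ⊔ M) ∧ APE ⁅N, M⁆ := by
  obtain ⟨hN1, hNN⟩ := hN
  obtain ⟨hM1, hMM⟩ := hM
  have hNn : N.Normal := normal_of_comm_le (hN1.trans (sq_le N))
  have hMn : M.Normal := normal_of_comm_le (hM1.trans (sq_le M))
  haveI := hNn; haveI := hMn
  haveI : (N ⊔ M).Normal := Subgroup.sup_normal N M
  have hsupsq : (N ⊔ M).sq.Normal := Normal.sq' ‹(N ⊔ M).Normal›
  have hsupsq2 : (N ⊔ M).sq.sq.Normal := Normal.sq' hsupsq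
  -- ⁅N, M⁆ ≤ (N²)² ≤ ((N ⊔ M)²)²
  have hNM : ⁅N, M⁆ ≤ N.sq.sq :=
    (Subgroup.commutator_mono (le_refl N) hM2).trans (lemB hNn hN1 hNN)
  have hNsup : N.sq.sq ≤ (N ⊔ M).sq.sq := sq_mono (sq_mono le_sup_left)
  have hMsup : M.sq.sq ≤ (N ⊔ M).sq.sq := sq_mono (sq_mono le_sup_right)
  constructor
  · constructor
    · -- ⁅N ⊔ M, ⊤⁆ ≤ (N ⊔ M)²
      refine comm_sup_left_le hsupsq ?_ ?_
      · exact hN1.trans (sq_mono le_sup_left)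
      · exact hM1.trans (sq_mono le_sup_right)
    · -- ⁅N ⊔ M, N ⊔ M⁆ ≤ ((N ⊔ M)²)²
      refine comm_sup_left_le hsupsq2 ?_ ?_
      · refine comm_sup_right_le hsupsq2 ?_ ?_
        · exact hNN.trans hNsup
        · exact hNM.trans hNsup
      · refine comm_sup_right_le hsupsq2 ?_ ?_
        · refine le_trans ?_ (hNM.trans hNsup)
          exact (Subgroup.commutator_comm M N).le
        · exact hMM.trans hMsup
  · have h1 : ⁅⁅N, M⁆, (⊤ : Subgroup G)⁆ ≤ ⁅N, M⁆.sq :=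
      lemF (Nat.card G) G (le_refl _) hG N M hN2 hM2 hN1 hM1
    refine ⟨h1, ?_⟩
    have hle : ⁅N, M⁆ ≤ (⊤ : Subgroup G).sq :=
      (Subgroup.commutator_le_left N M).trans hN2
    exact lemE (Nat.card G) G (le_refl _) hG ⁅N, M⁆ hle h1
end

section
/- Let G be a finite 2-group and H, K ≤ G subgroups with [K,H] ≤ K^2. Then d(HK) ≥ d(H) + d(K) − d(H ∩ K), with equality if and only if (H ∩ K)^2 = H^2 ∩ K^2. -/
namespace Stmt13

open Subgroup Pointwise
open scoped commutatorElement

variable {G : Type*} [Group G]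

lemma mem_sq {H : Subgroup G} {x : G} (hx : x ∈ H) : x ^ 2 ∈ H.sq :=
  Subgroup.subset_closure ⟨x, hx, rfl⟩

lemma sq_le {H : Subgroup G} : H.sq ≤ H := by
  rw [Subgroup.sq, Subgroup.closure_le]
  rintro _ ⟨x, hx, rfl⟩
  exact H.pow_mem hx 2

lemma sq_mono {H K : Subgroup G} (h : H ≤ K) : H.sq ≤ K.sq := by
  rw [Subgroup.sq, Subgroup.closure_le]
  rintro _ ⟨x, hx, rfl⟩
  exact mem_sq (h hx)

lemma sq_map {G' : Type*} [Group G'] (f : G →* G') (H : Subgroup G) :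
    (H.map f).sq = H.sq.map f := by
  rw [Subgroup.sq, Subgroup.sq, MonoidHom.map_closure]
  congr 1
  rw [Subgroup.coe_map, Set.image_image, Set.image_image]
  simp

/-- The subgroup generated by all squares of a group. -/
abbrev sqT (X : Type*) [Group X] : Subgroup X := (⊤ : Subgroup X).sq

lemma map_subtype_sqT (H : Subgroup G) : (sqT H).map H.subtype = H.sq := by
  rw [← sq_map, ← MonoidHom.range_eq_map, H.range_subtype]

lemma card_map_of_injective {G' : Type*} [Group G'] (f : G →* G') (hf : Function.Injective f)
    (A : Subgroup G) : Nat.card (A.map f) = Nat.card A :=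
  (Nat.card_congr (Subgroup.equivMapOfInjective A f hf).toEquiv).symm

lemma card_subgroupOf (A B : Subgroup G) :
    Nat.card (A.subgroupOf B) = Nat.card (A ⊓ B : Subgroup G) := by
  rw [← Subgroup.subgroupOf_map_subtype, card_map_of_injective _ B.subtype_injective]

instance sqT_normal (X : Type*) [Group X] : (sqT X).Normal := by
  constructor
  intro n hn g
  have h := sq_map (MulAut.conj g).toMonoidHom (⊤ : Subgroup X)
  rw [Subgroup.map_top_of_surjective _ (MulAut.conj g).surjective] at h
  have hmem : (MulAut.conj g) n ∈ (sqT X).map (MulAut.conj g).toMonoidHom := ⟨n, hn, rfl⟩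
  rw [← h] at hmem
  simpa using hmem

lemma le_normalizer_of_commutator {H K : Subgroup G} (hKH : ⁅K, H⁆ ≤ K) :
    H ≤ normalizer (K : Set G) := by
  have conj : ∀ h ∈ H, ∀ x ∈ K, h * x * h⁻¹ ∈ K := by
    intro h hh x hx
    have hc : ⁅h, x⁆ ∈ K :=
      (Subgroup.commutator_comm K H ▸ hKH) (Subgroup.commutator_mem_commutator hh hx)
    have e : h * x * h⁻¹ = ⁅h, x⁆ * x := by
      rw [commutatorElement_def]; group
    rw [e]; exact K.mul_mem hc hx
  intro h hh
  rw [Subgroup.mem_normalizer_iff]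
  intro k
  constructor
  · exact fun hk => conj h hh k hk
  · intro hk
    have h2 := conj h⁻¹ (inv_mem hh) _ hk
    have e : h⁻¹ * (h * k * h⁻¹) * h⁻¹⁻¹ = k := by group
    rwa [e] at h2

lemma coe_sup {H K : Subgroup G} (h : H ≤ normalizer (K : Set G)) :
    (↑(H ⊔ K) : Set G) = (H : Set G) * (K : Set G) := by
  rw [Subgroup.sup_eq_closure_mul]
  refine Set.Subset.antisymm (fun x hx => ?_) Subgroup.subset_closure
  induction hx using Subgroup.closure_induction'' with
  | one => exact ⟨1, one_mem _, 1, one_mem _, mul_one 1⟩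
  | mem _ hx => exact hx
  | inv_mem x hx =>
      obtain ⟨x, hx, y, hy, rfl⟩ := hx
      exact ⟨x⁻¹, inv_mem hx, x * y⁻¹ * x⁻¹,
        (Subgroup.mem_normalizer_iff.mp (h hx) _).mp (inv_mem hy), by group⟩
  | mul x' x'' _ _ hx hx' =>
      obtain ⟨x, hx, y, hy, rfl⟩ := hx
      obtain ⟨x', hx', y', hy', rfl⟩ := hx'
      exact ⟨x * x', mul_mem hx hx', x'⁻¹ * y * x' * y',
        mul_mem ((Subgroup.mem_normalizer_iff''.mp (h hx') y).mp hy) hy', by group⟩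

lemma sq_sup {H K : Subgroup G} (h : H ≤ normalizer (K : Set G)) (hcomm : ⁅H, K⁆ ≤ K.sq) :
    (H ⊔ K).sq = H.sq ⊔ K.sq := by
  refine le_antisymm ?_ (sup_le (sq_mono le_sup_left) (sq_mono le_sup_right))
  rw [Subgroup.sq, Subgroup.closure_le]
  rintro _ ⟨x, hx, rfl⟩
  have hx' : x ∈ (↑(H ⊔ K) : Set G) := hx
  rw [coe_sup h] at hx'
  obtain ⟨a, ha, k, hk, rfl⟩ := hx'
  have hc : ⁅a⁻¹, k⁆ ∈ K.sq := hcomm (Subgroup.commutator_mem_commutator (inv_mem ha) hk)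
  show (a * k) ^ 2 ∈ (H.sq ⊔ K.sq : Subgroup G)
  have e : (a * k) ^ 2 = a ^ 2 * (⁅a⁻¹, k⁆ * k ^ 2) := by
    simp only [pow_two, commutatorElement_def, inv_inv]
    group
  rw [e]
  exact mul_mem (Subgroup.mem_sup_left (mem_sq ha))
    (Subgroup.mem_sup_right (mul_mem hc (mem_sq hk)))

lemma sup_le_normalizer_sq {H K : Subgroup G} (h : H ≤ normalizer (K : Set G)) :
    H ⊔ K ≤ normalizer (K.sq : Set G) := by
  intro g hg
  have hg' : g ∈ normalizer (K : Set G) := (sup_le h Subgroup.le_normalizer) hg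
  have hmap : K.map (MulAut.conj g).toMonoidHom = K := by
    ext k
    simp only [Subgroup.mem_map, MulEquiv.coe_toMonoidHom, MulAut.conj_apply]
    constructor
    · rintro ⟨y, hy, rfl⟩
      exact (Subgroup.mem_normalizer_iff.mp hg' y).mp hy
    · intro hk
      exact ⟨g⁻¹ * k * g, (Subgroup.mem_normalizer_iff''.mp hg' k).mp hk, by group⟩
  have hmapsq : K.sq.map (MulAut.conj g).toMonoidHom = K.sq := by rw [← sq_map, hmap]
  rw [Subgroup.mem_normalizer_iff]
  intro x
  constructor
  · intro hx
    have hmem : (MulAut.conj g) x ∈ K.sq.map (MulAut.conj g).toMonoidHom := ⟨x, hx, rfl⟩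
    rw [hmapsq] at hmem
    simpa using hmem
  · intro hx
    rw [← hmapsq] at hx
    obtain ⟨y, hy, he⟩ := hx
    simp only [MulEquiv.coe_toMonoidHom, MulAut.conj_apply] at he
    have hyx : y = x := mul_left_cancel (mul_right_cancel he)
    rwa [hyx] at hy

lemma card_sup_mul_card_inf [Finite G] {H K : Subgroup G} (h : H ≤ normalizer (K : Set G)) :
    Nat.card (H ⊔ K : Subgroup G) * Nat.card (H ⊓ K : Subgroup G) = Nat.card H * Nat.card K := by
  set N := normalizer (K : Set G) with hNdef
  haveI : (K.subgroupOf N).Normal := Subgroup.normal_in_normalizer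
  set H' := H.subgroupOf N with hH'
  set K' := K.subgroupOf N with hK'
  have e2 := QuotientGroup.quotientInfEquivProdNormalQuotient H' K'
  have hq := Nat.card_congr e2.toEquiv
  have h1 : Nat.card (K'.subgroupOf H') * Nat.card (H' ⧸ K'.subgroupOf H') = Nat.card H' := by
    rw [← Subgroup.index_eq_card]; exact Subgroup.card_mul_index _
  have h2 : Nat.card (K'.subgroupOf (H' ⊔ K')) *
      Nat.card ((H' ⊔ K' : Subgroup N) ⧸ K'.subgroupOf (H' ⊔ K')) =
      Nat.card (H' ⊔ K' : Subgroup N) := by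
    rw [← Subgroup.index_eq_card]; exact Subgroup.card_mul_index _
  have c1 : Nat.card (K'.subgroupOf H') = Nat.card (H' ⊓ K' : Subgroup N) := by
    rw [card_subgroupOf, inf_comm]
  have c2 : Nat.card (K'.subgroupOf (H' ⊔ K')) = Nat.card K' := by
    rw [card_subgroupOf, inf_eq_left.mpr le_sup_right]
  have key : Nat.card (H' ⊔ K' : Subgroup N) * Nat.card (H' ⊓ K' : Subgroup N) =
      Nat.card H' * Nat.card K' := by
    rw [← h2, c2, ← hq, ← c1, ← h1]
    ring
  have tH : Nat.card H' = Nat.card H := by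
    rw [hH', card_subgroupOf, inf_eq_left.mpr h]
  have tK : Nat.card K' = Nat.card K := by
    rw [hK', card_subgroupOf, inf_eq_left.mpr Subgroup.le_normalizer]
  have tSup : (H ⊔ K).subgroupOf N = H' ⊔ K' :=
    (Subgroup.subgroupOf_sup h Subgroup.le_normalizer)
  have tInf : (H ⊓ K).subgroupOf N = H' ⊓ K' := by
    rw [hH', hK', Subgroup.subgroupOf, Subgroup.subgroupOf, Subgroup.subgroupOf,
      Subgroup.comap_inf]
  have cSup : Nat.card (H' ⊔ K' : Subgroup N) = Nat.card (H ⊔ K : Subgroup G) := by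
    rw [← tSup, card_subgroupOf, inf_eq_left.mpr (sup_le h Subgroup.le_normalizer)]
  have cInf : Nat.card (H' ⊓ K' : Subgroup N) = Nat.card (H ⊓ K : Subgroup G) := by
    rw [← tInf, card_subgroupOf, inf_eq_left.mpr ((inf_le_right).trans Subgroup.le_normalizer)]
  rw [← tH, ← tK, ← cSup, ← cInf, key]

lemma sqT_le_coatom {X : Type*} [Group X] [Finite X] (hX : IsPGroup 2 X)
    {M : Subgroup X} (hM : IsCoatom M) : sqT X ≤ M := by
  haveI : Fact (Nat.Prime 2) := ⟨Nat.prime_two⟩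
  haveI : M.Normal := by
    have h2 := (isNilpotent_of_finite_tfae (G := X)).out 0 2
    exact (h2.mp hX.isNilpotent) M hM
  set Qm := X ⧸ M with hQm
  have hQ : IsPGroup 2 Qm := hX.to_quotient M
  obtain ⟨n, hn⟩ := IsPGroup.iff_card.mp hQ
  have hn0 : n ≠ 0 := by
    intro h0
    rw [h0, pow_zero] at hn
    have h1 : M.index = 1 := by rw [Subgroup.index_eq_card, hn]
    exact hM.1 (Subgroup.index_eq_one.mp h1)
  have hn1 : n = 1 := by
    by_contra hne
    obtain ⟨S, hS⟩ := Sylow.exists_subgroup_card_pow_prime (G := Qm) 2 (n := 1)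
      (by rw [hn]; exact pow_dvd_pow 2 (by omega))
    have hSbot : S ≠ ⊥ := by
      intro hb
      rw [hb, Subgroup.card_bot] at hS
      simp at hS
    have hStop : S ≠ ⊤ := by
      intro ht
      rw [ht, Subgroup.card_top, hn] at hS
      exact hne (Nat.pow_right_injective (le_refl 2) hS)
    set π := QuotientGroup.mk' M with hπ
    have hlt : M < Subgroup.comap π S := by
      refine lt_of_le_of_ne ?_ ?_
      · intro m hm
        have hm1 : π m = 1 := (QuotientGroup.eq_one_iff m).mpr hm
        rw [Subgroup.mem_comap, hm1]
        exact S.one_mem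
      · intro he
        apply hSbot
        rw [eq_bot_iff]
        intro s hs
        obtain ⟨x, rfl⟩ := QuotientGroup.mk'_surjective M s
        have hxM : x ∈ M := by
          rw [he]; exact hs
        have hone : π x = 1 := (QuotientGroup.eq_one_iff x).mpr hxM
        rw [hone]
        exact Subgroup.one_mem ⊥
    have htop := hM.2 _ hlt
    apply hStop
    have hmc := Subgroup.map_comap_eq_self_of_surjective (QuotientGroup.mk'_surjective M) S
    rw [← hmc, htop, Subgroup.map_top_of_surjective _ (QuotientGroup.mk'_surjective M)]
  refine (Subgroup.closure_le _).mpr ?_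
  rintro _ ⟨x, -, rfl⟩
  have hx2 : (QuotientGroup.mk' M) (x ^ 2) = 1 := by
    rw [map_pow]
    have hp : ((QuotientGroup.mk' M) x) ^ Nat.card Qm = 1 := pow_card_eq_one'
    rwa [hn, hn1, pow_one] at hp
  exact (QuotientGroup.eq_one_iff (x ^ 2)).mp hx2

lemma sqT_le_frattini {X : Type*} [Group X] [Finite X] (hX : IsPGroup 2 X) :
    sqT X ≤ frattini X := by
  rw [frattini, Order.radical, le_iInf₂_iff]
  intro M hM
  exact sqT_le_coatom hX hM

/-- Burnside basis theorem for finite `2`-groups. -/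
lemma index_sqT (X : Type*) [Group X] [Finite X] (hX : IsPGroup 2 X) :
    (sqT X).index = 2 ^ Group.rank X := by
  haveI : Fact (Nat.Prime 2) := ⟨Nat.prime_two⟩
  set Q := X ⧸ sqT X with hQdef
  have hsq : ∀ q : Q, q * q = 1 := by
    intro q
    induction q using QuotientGroup.induction_on with
    | _ x =>
      rw [← QuotientGroup.mk_mul, QuotientGroup.eq_one_iff, ← pow_two]
      exact mem_sq (Subgroup.mem_top x)
  letI cg : CommGroup Q :=
    { (inferInstance : Group Q) with
      mul_comm := fun a b => by
        have ha : a⁻¹ = a := inv_eq_of_mul_eq_one_right (hsq a)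
        have hb : b⁻¹ = b := inv_eq_of_mul_eq_one_right (hsq b)
        have hab : (a * b)⁻¹ = a * b := inv_eq_of_mul_eq_one_right (hsq (a * b))
        calc a * b = (a * b)⁻¹ := hab.symm
          _ = b⁻¹ * a⁻¹ := mul_inv_rev a b
          _ = b * a := by rw [ha, hb] }
  letI : Module (ZMod 2) (Additive Q) := AddCommGroup.zmodModule (by
    intro x
    show (2 : ℕ) • x = 0
    rw [two_nsmul]
    exact hsq x.toMul)
  haveI : Finite (Additive Q) := Finite.of_equiv Q Additive.ofMul
  haveI : Module.Finite (ZMod 2) (Additive Q) := Module.Finite.of_finite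
  have spanClosure : ∀ s : Set Q,
      (Subgroup.closure s = ⊤ ↔ Submodule.span (ZMod 2) (Additive.ofMul '' s) = ⊤) := by
    intro s
    constructor
    · intro hcl
      rw [eq_top_iff]
      rintro x -
      have hx : Additive.toMul x ∈ Subgroup.closure s := by rw [hcl]; trivial
      refine Subgroup.closure_induction
        (p := fun y _ => Additive.ofMul y ∈ Submodule.span (ZMod 2) (Additive.ofMul '' s))
        (fun y hy => Submodule.subset_span ⟨y, hy, rfl⟩)
        (Submodule.zero_mem _)
        (fun y z _ _ hy hz => Submodule.add_mem _ hy hz)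
        (fun y _ hy => Submodule.neg_mem _ hy) hx
    · intro hsp
      rw [eq_top_iff]
      rintro y -
      have hy : Additive.ofMul y ∈ Submodule.span (ZMod 2) (Additive.ofMul '' s) := by
        rw [hsp]; trivial
      have hle : Submodule.span (ZMod 2) (Additive.ofMul '' s) ≤
          AddSubgroup.toZModSubmodule 2 (Subgroup.toAddSubgroup (G := Q) (Subgroup.closure s)) := by
        rw [Submodule.span_le]
        rintro _ ⟨z, hz, rfl⟩
        exact Subgroup.subset_closure (G := Q) hz
      exact hle hy
  have hrankQ : Group.rank Q = Module.finrank (ZMod 2) (Additive Q) := by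
    apply le_antisymm
    · classical
      let b := Module.finBasis (ZMod 2) (Additive Q)
      let S : Finset Q := Finset.univ.image fun i => Additive.toMul (b i)
      have hgen : Subgroup.closure (S : Set Q) = ⊤ := by
        rw [spanClosure]
        rw [eq_top_iff, ← b.span_eq]
        apply Submodule.span_mono
        rintro _ ⟨i, rfl⟩
        exact ⟨Additive.toMul (b i), by simp [S], rfl⟩
      calc Group.rank Q ≤ S.card := Group.rank_le hgen
        _ ≤ (Finset.univ : Finset (Fin (Module.finrank (ZMod 2) (Additive Q)))).card :=
            Finset.card_image_le
        _ = Module.finrank (ZMod 2) (Additive Q) := by simp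
    · classical
      obtain ⟨S, hcard, hgen⟩ := Group.rank_spec Q
      rw [spanClosure] at hgen
      have h1 : Module.finrank (ZMod 2) (Additive Q) ≤
          (S.image fun y => Additive.ofMul y).card := by
        have hsp : Submodule.span (ZMod 2)
            (((S.image fun y => Additive.ofMul y) : Finset (Additive Q)) : Set (Additive Q)) =
            ⊤ := by
          rw [Finset.coe_image]; exact hgen
        have h2 := finrank_span_finset_le_card (R := ZMod 2) (S.image fun y => Additive.ofMul y)
        rw [Set.finrank, hsp, finrank_top] at h2
        exact h2
      calc Module.finrank (ZMod 2) (Additive Q) ≤ _ := h1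
        _ ≤ S.card := Finset.card_image_le
        _ = Group.rank Q := hcard
  have hrk2 : Group.rank Q ≤ Group.rank X :=
    Group.rank_le_of_surjective (QuotientGroup.mk' _) (QuotientGroup.mk'_surjective _)
  have hrk1 : Group.rank X ≤ Group.rank Q := by
    classical
    obtain ⟨S, hcard, hgen⟩ := Group.rank_spec Q
    set π := QuotientGroup.mk' (sqT X) with hπdef
    have hπ : Function.Surjective π := QuotientGroup.mk'_surjective _
    set T : Finset X := S.image (Function.surjInv hπ) with hTdef
    have hmap : Subgroup.map π (Subgroup.closure (T : Set X)) = ⊤ := by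
      rw [MonoidHom.map_closure]
      have himg : π '' (T : Set X) = (S : Set Q) := by
        rw [hTdef, Finset.coe_image, ← Set.image_comp]
        have heq : ∀ y ∈ (S : Set Q), (π ∘ Function.surjInv hπ) y = y := fun y _ =>
          Function.surjInv_eq hπ y
        rw [Set.image_congr heq, Set.image_id']
      rw [himg, hgen]
    have hsup : Subgroup.closure (T : Set X) ⊔ sqT X = ⊤ := by
      have hc := Subgroup.comap_map_eq (f := π) (Subgroup.closure (T : Set X))
      rw [hmap, Subgroup.comap_top, QuotientGroup.ker_mk'] at hc
      exact hc.symm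
    haveI : Finite (Subgroup X) := Finite.of_injective _ SetLike.coe_injective
    have hT : Subgroup.closure (T : Set X) = ⊤ := by
      apply frattini_nongenerating
      rw [eq_top_iff, ← hsup]
      exact sup_le le_sup_left ((sqT_le_frattini hX).trans le_sup_right)
    calc Group.rank X ≤ T.card := Group.rank_le hT
      _ ≤ S.card := Finset.card_image_le
      _ = Group.rank Q := hcard
  letI := Fintype.ofFinite (Additive Q)
  have hcardQ : Nat.card Q = 2 ^ Module.finrank (ZMod 2) (Additive Q) := by
    have h := Module.card_eq_pow_finrank (K := ZMod 2) (V := Additive Q)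
    rw [ZMod.card] at h
    rw [Nat.card_congr (Additive.ofMul (α := Q)), Nat.card_eq_fintype_card, h]
  have hrr : Group.rank Q = Group.rank X := le_antisymm hrk2 hrk1
  rw [Subgroup.index_eq_card]
  calc Nat.card (X ⧸ sqT X) = 2 ^ Module.finrank (ZMod 2) (Additive Q) := hcardQ
    _ = 2 ^ Group.rank X := by rw [← hrankQ, hrr]

lemma card_eq_rank [Finite G] (hG : IsPGroup 2 G) (A : Subgroup G) :
    Nat.card A = 2 ^ Group.rank A * Nat.card A.sq := by
  have hb := index_sqT A (hG.to_subgroup A)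
  have h1 : Nat.card (sqT A) * (sqT A).index = Nat.card A := Subgroup.card_mul_index _
  have h2 : Nat.card A.sq = Nat.card (sqT A) := by
    rw [← map_subtype_sqT, card_map_of_injective _ A.subtype_injective]
  rw [← h1, hb, h2]
  ring

end Stmt13

/-- If `H, K` are subgroups of the finite `2`-group `G` with `[K,H] ≤ K²`, then
`d(HK) ≥ d(H) + d(K) − d(H ∩ K)`, with equality iff `(H ∩ K)² = H² ∩ K²`. -/
theorem stmt13 {G : Type*} [Group G] [Finite G] (hG : IsPGroup 2 G)
    (H K : Subgroup G) (hKH : ⁅K, H⁆ ≤ K.sq) :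
    Group.rank H + Group.rank K ≤ Group.rank (H ⊔ K : Subgroup G) + Group.rank (H ⊓ K : Subgroup G) ∧
      (Group.rank (H ⊔ K : Subgroup G) + Group.rank (H ⊓ K : Subgroup G)
          = Group.rank H + Group.rank K ↔ (H ⊓ K).sq = H.sq ⊓ K.sq) := by
  haveI : Fact (Nat.Prime 2) := ⟨Nat.prime_two⟩
  have hKH' : ⁅K, H⁆ ≤ K := hKH.trans Stmt13.sq_le
  have hn : H ≤ Subgroup.normalizer (K : Set G) := Stmt13.le_normalizer_of_commutator hKH'
  have hcomm : ⁅H, K⁆ ≤ K.sq := by rw [Subgroup.commutator_comm]; exact hKH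
  have hsqsup : (H ⊔ K).sq = H.sq ⊔ K.sq := Stmt13.sq_sup hn hcomm
  have hnorm2 : H.sq ≤ Subgroup.normalizer (K.sq : Set G) :=
    le_trans (le_trans Stmt13.sq_le le_sup_left) (Stmt13.sup_le_normalizer_sq hn)
  have E1 := Stmt13.card_sup_mul_card_inf hn
  have E4 := Stmt13.card_sup_mul_card_inf hnorm2
  have CH := Stmt13.card_eq_rank hG H
  have CK := Stmt13.card_eq_rank hG K
  have CS := Stmt13.card_eq_rank hG (H ⊔ K)
  have CI := Stmt13.card_eq_rank hG (H ⊓ K)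
  obtain ⟨a, ha⟩ := IsPGroup.iff_card.mp (hG.to_subgroup (H.sq ⊓ K.sq))
  obtain ⟨b, hb⟩ := IsPGroup.iff_card.mp (hG.to_subgroup (H ⊓ K).sq)
  have hle : (H ⊓ K).sq ≤ H.sq ⊓ K.sq :=
    le_inf (Stmt13.sq_mono inf_le_left) (Stmt13.sq_mono inf_le_right)
  have hdvd : Nat.card (H ⊓ K).sq ∣ Nat.card (H.sq ⊓ K.sq : Subgroup G) :=
    Subgroup.card_dvd_of_le hle
  have hba : b ≤ a := by
    rw [ha, hb] at hdvd
    exact (Nat.pow_dvd_pow_iff_le_right one_lt_two).mp hdvd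
  set rS := Group.rank (H ⊔ K : Subgroup G) with hrS
  set rI := Group.rank (H ⊓ K : Subgroup G) with hrI
  set rH := Group.rank H with hrH
  set rK := Group.rank K with hrK
  have key : rS + rI + b = rH + rK + a := by
    rw [CS, CI, CH, CK, hsqsup, hb] at E1
    rw [ha] at E4
    have e : 2 ^ (rS + rI + b) * Nat.card (H.sq ⊔ K.sq : Subgroup G) =
        2 ^ (rH + rK + a) * Nat.card (H.sq ⊔ K.sq : Subgroup G) := by
      calc 2 ^ (rS + rI + b) * Nat.card (H.sq ⊔ K.sq : Subgroup G)
          = 2 ^ rS * Nat.card (H.sq ⊔ K.sq : Subgroup G) * (2 ^ rI * 2 ^ b) := by ring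
        _ = 2 ^ rH * Nat.card H.sq * (2 ^ rK * Nat.card K.sq) := E1
        _ = 2 ^ (rH + rK) * (Nat.card H.sq * Nat.card K.sq) := by ring
        _ = 2 ^ (rH + rK) * (Nat.card (H.sq ⊔ K.sq : Subgroup G) * 2 ^ a) := by rw [E4]
        _ = 2 ^ (rH + rK + a) * Nat.card (H.sq ⊔ K.sq : Subgroup G) := by ring
    have hpos : 0 < Nat.card (H.sq ⊔ K.sq : Subgroup G) := Nat.card_pos
    have hpow : (2 : ℕ) ^ (rS + rI + b) = 2 ^ (rH + rK + a) :=
      Nat.eq_of_mul_eq_mul_right hpos e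
    exact Nat.pow_right_injective (le_refl 2) hpow
  refine ⟨by omega, ?_, ?_⟩
  · intro heq
    have hab : a = b := by omega
    have hcardeq : Nat.card (H.sq ⊓ K.sq : Subgroup G) ≤ Nat.card (H ⊓ K).sq := by
      rw [ha, hb, hab]
    have hsets : ((H ⊓ K).sq : Set G) = ((H.sq ⊓ K.sq : Subgroup G) : Set G) := by
      apply Set.eq_of_subset_of_ncard_le hle _ (Set.toFinite _)
      rw [← Nat.card_coe_set_eq, ← Nat.card_coe_set_eq]
      exact hcardeq
    exact SetLike.coe_injective hsets
  · intro hsqeq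
    have hcard : (2 : ℕ) ^ b = 2 ^ a := by rw [← hb, ← ha, hsqeq]
    have hab : b = a := Nat.pow_right_injective (le_refl 2) hcard
    omega
end
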